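/- arXiv:1301.0292 — 4 statements merged into one kernel-verified Lean document; each statement's English description precedes it below -/
import Mathlib

section
/- Let G be a finite group with a normal 2-subgroup Q such that G/Q ≅ S₃ and every element of order 3 in G acts on Q without non-trivial fixed points. Then G splits over Q and all complements to Q in G are conjugate. -/
/-!
Take `g` of order 3 and `S = ⟨g⟩`, a Sylow 3-subgroup. Since `SQ` has index 2 it is normal, so
the Frattini argument gives `Q · N_G(S) = G`; and for `x ∈ Q ∩ N_G(S)` the commutator `[x, g]`
lies in `Q ∩ S = 1`, so `x` is fixed by `g` and hence trivial. Thus `N_G(S)` is a complement.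
Conversely a complement `L` has order 6, so its subgroup of order 3 is normal in `L` and
`L ≤ N_G(S)` for that `S`; comparing orders, `L = N_G(S)`. Conjugacy of complements is then
conjugacy of Sylow 3-subgroups.
-/

namespace Subgroup

variable {G : Type*} [Group G]

theorem isComplement'_of_disjoint_of_sup_eq_top {Q K : Subgroup G} [Q.Normal]
    (hdisj : Disjoint Q K) (hsup : Q ⊔ K = ⊤) : Q.IsComplement' K :=
  isComplement'_of_disjoint_and_mul_eq_univ hdisj (by rw [← normal_mul, hsup, coe_top])

theorem IsComplement'.eq_of_le [Finite G] {Q K L : Subgroup G} (hK : Q.IsComplement' K)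
    (hL : Q.IsComplement' L) (hle : K ≤ L) : K = L :=
  eq_of_le_of_card_ge hle <| le_of_eq <| Nat.eq_of_mul_eq_mul_left Nat.card_pos
    (hL.card_mul_card.trans hK.card_mul_card.symm)

theorem le_normalizer_of_relIndex_eq_two {H K : Subgroup G} (hHK : H ≤ K)
    (h : H.relIndex K = 2) : K ≤ normalizer (H : Set G) :=
  have := normal_of_index_eq_two h
  le_normalizer_of_normal_subgroupOf hHK

theorem inf_normalizer_eq_bot_of_fixedPointFree {Q P : Subgroup G} [Q.Normal]
    (hdisj : Disjoint Q P) {g : G} (hg : g ∈ P)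
    (hfpf : ∀ q ∈ Q, g * q * g⁻¹ = q → q = 1) : Q ⊓ normalizer (P : Set G) = ⊥ := by
  refine eq_bot_iff.2 fun x ⟨hxQ, hxN⟩ => ?_
  have hcomm : x * g * x⁻¹ * g⁻¹ ∈ Q ⊓ P := by
    refine mem_inf.2 ⟨?_, P.mul_mem ((mem_normalizer_iff.1 hxN g).1 hg) (P.inv_mem hg)⟩
    simpa only [mul_assoc] using Q.mul_mem hxQ (Normal.conj_mem ‹_› _ (Q.inv_mem hxQ) g)
  rw [hdisj.eq_bot, mem_bot, mul_inv_eq_one, mul_inv_eq_iff_eq_mul] at hcomm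
  exact hfpf x hxQ (by rw [← hcomm, mul_inv_cancel_right])

end Subgroup

namespace Sylow

open Subgroup Pointwise

variable {G : Type*} [Group G] [Finite G] {p : ℕ} [Fact p.Prime]

theorem sup_normalizer_eq_top_of_sup_normal {Q : Subgroup G} (P : Sylow p G)
    [((P : Subgroup G) ⊔ Q).Normal] : Q ⊔ normalizer (P : Subgroup G) = ⊤ := by
  have := P.normalizer_sup_eq_top' (N := (P : Subgroup G) ⊔ Q) le_sup_left
  rwa [← P.coe_coe, ← sup_assoc, sup_of_le_left le_normalizer, sup_comm] at this

theorem isComplement'_normalizer_of_fixedPointFree {Q : Subgroup G} [Q.Normal] (P : Sylow p G)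
    [((P : Subgroup G) ⊔ Q).Normal] (hdisj : Disjoint Q P) {g : G} (hg : g ∈ P)
    (hfpf : ∀ q ∈ Q, g * q * g⁻¹ = q → q = 1) :
    Q.IsComplement' (normalizer (P : Subgroup G)) :=
  isComplement'_of_disjoint_of_sup_eq_top
    (disjoint_iff.2 (inf_normalizer_eq_bot_of_fixedPointFree hdisj hg hfpf))
    P.sup_normalizer_eq_top_of_sup_normal

theorem exists_normalizer_eq_map_conj (P₁ P₂ : Sylow p G) :
    ∃ g : G, normalizer (P₂ : Subgroup G) =
      (normalizer (P₁ : Subgroup G)).map (MulAut.conj g).toMonoidHom := by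
  obtain ⟨g, rfl⟩ := MulAction.exists_smul_eq G P₁ P₂
  refine ⟨g, ?_⟩
  rw [coe_subgroup_smul, Subgroup.pointwise_smul_def]
  exact (map_normalizer_eq_of_bijective _ (MulAut.conj g).bijective).symm

end Sylow

section

open Subgroup

variable {G : Type*} [Group G] {Q : Subgroup G}

theorem sup_index_eq_two_of_card_eq_three [Q.Normal] (hindex : Q.index = 6) {S : Subgroup G}
    (hS : Nat.card S = 3) (hdisj : Disjoint Q S) : (S ⊔ Q).index = 2 := by
  have := relIndex_mul_index (le_sup_right : Q ≤ S ⊔ Q)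
  rw [relIndex_sup_right, ← inf_relIndex_right, hdisj.eq_bot, relIndex_bot_left, hS,
    hindex] at this
  omega

variable [Finite G]

theorem exists_sylow_three_coe_eq_zpowers (hQ2 : IsPGroup 2 Q) (hindex : Q.index = 6) {g : G}
    (hg : orderOf g = 3) : ∃ P : Sylow 3 G, (P : Subgroup G) = zpowers g := by
  have : Fact (Nat.Prime 3) := ⟨Nat.prime_three⟩
  have hcard : Nat.card (zpowers g) = 3 := by rw [Nat.card_zpowers, hg]
  have h3 : IsPGroup 3 (zpowers g) := IsPGroup.of_card (n := 1) (by rw [hcard, pow_one])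
  obtain ⟨k, hk⟩ := IsPGroup.iff_card.1 hQ2
  have hindex' : (zpowers g).index = 2 ^ (k + 1) := by
    have := (zpowers g).card_mul_index.trans Q.card_mul_index.symm
    rw [hcard, hk, hindex] at this
    exact Nat.eq_of_mul_eq_mul_left three_pos (by rw [this, pow_succ]; ring)
  have hndvd : ¬ 3 ∣ (zpowers g).index := by
    rw [hindex']
    exact fun h ↦ by simpa using Nat.Prime.dvd_of_dvd_pow Nat.prime_three h
  exact ⟨h3.toSylow hndvd, rfl⟩

theorem isComplement'_normalizer_zpowers [Q.Normal] (hQ2 : IsPGroup 2 Q) (hindex : Q.index = 6)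
    (hfpf : ∀ g : G, orderOf g = 3 → ∀ q ∈ Q, g * q * g⁻¹ = q → q = 1) {g : G}
    (hg : orderOf g = 3) : Q.IsComplement' (normalizer (zpowers g : Set G)) := by
  have : Fact (Nat.Prime 3) := ⟨Nat.prime_three⟩
  obtain ⟨P, hP⟩ := exists_sylow_three_coe_eq_zpowers hQ2 hindex hg
  have hdisj : Disjoint Q P := IsPGroup.disjoint_of_ne 2 3 (by norm_num) _ _ hQ2 P.isPGroup'
  have : ((P : Subgroup G) ⊔ Q).Normal := normal_of_index_eq_two <|
    sup_index_eq_two_of_card_eq_three hindex (by rw [hP, Nat.card_zpowers, hg]) hdisj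
  rw [← hP]
  have hgP : g ∈ (P : Subgroup G) := hP ▸ mem_zpowers g
  exact P.isComplement'_normalizer_of_fixedPointFree hdisj hgP (hfpf g hg)

theorem exists_eq_normalizer_zpowers [Q.Normal] (hQ2 : IsPGroup 2 Q) (hindex : Q.index = 6)
    (hfpf : ∀ g : G, orderOf g = 3 → ∀ q ∈ Q, g * q * g⁻¹ = q → q = 1) {L : Subgroup G}
    (hL : Q.IsComplement' L) :
    ∃ g : G, orderOf g = 3 ∧ L = normalizer (zpowers g : Set G) := by
  have : Fact (Nat.Prime 3) := ⟨Nat.prime_three⟩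
  have hcard : Nat.card L = 6 := (hL.card_right : Nat.card L = Q.index).trans hindex
  obtain ⟨x, hx⟩ := exists_prime_orderOf_dvd_card' (G := L) 3 (by rw [hcard]; norm_num)
  rw [← Subgroup.orderOf_coe] at hx
  have hle : zpowers (x : G) ≤ L := zpowers_le.2 x.2
  have hrel : (zpowers (x : G)).relIndex L = 2 := by
    have := relIndex_mul_relIndex ⊥ _ L bot_le hle
    rw [relIndex_bot_left, relIndex_bot_left, Nat.card_zpowers, hx, hcard] at this
    omega
  exact ⟨x, hx, hL.eq_of_le (isComplement'_normalizer_zpowers hQ2 hindex hfpf hx)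
    (le_normalizer_of_relIndex_eq_two hle hrel)⟩

end

/-- Let `G` be a finite group with a normal 2-subgroup `Q` such that
`G/Q ≅ S₃` and every element of order 3 in `G` acts on `Q` without non-trivial
fixed points.  Then `G` splits over `Q` and all complements to `Q` in `G` are
conjugate. -/
theorem stmt0 (G : Type*) [Group G] [Fintype G] (Q : Subgroup G) [Q.Normal]
    (hQ2 : IsPGroup 2 Q)
    (hquot : Nonempty ((G ⧸ Q) ≃* Equiv.Perm (Fin 3)))
    (hfpf : ∀ g : G, orderOf g = 3 → ∀ q ∈ Q, g * q * g⁻¹ = q → q = 1) :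
    (∃ L : Subgroup G, Q.IsComplement' L) ∧
      (∀ L₁ L₂ : Subgroup G, Q.IsComplement' L₁ → Q.IsComplement' L₂ →
        ∃ g : G, L₂ = L₁.map (MulAut.conj g).toMonoidHom) := by
  have : Fact (Nat.Prime 3) := ⟨Nat.prime_three⟩
  have hindex : Q.index = 6 := by
    rw [Subgroup.index, Nat.card_congr hquot.some.toEquiv, Nat.card_perm]
    simp [Nat.factorial]
  refine ⟨?_, fun L₁ L₂ h₁ h₂ ↦ ?_⟩
  · obtain ⟨g, hg⟩ := exists_prime_orderOf_dvd_card' (G := G) 3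
      ((show 3 ∣ Q.index by rw [hindex]; norm_num).trans Q.index_dvd_card)
    exact ⟨_, isComplement'_normalizer_zpowers hQ2 hindex hfpf hg⟩
  · obtain ⟨g₁, hg₁, rfl⟩ := exists_eq_normalizer_zpowers hQ2 hindex hfpf h₁
    obtain ⟨g₂, hg₂, rfl⟩ := exists_eq_normalizer_zpowers hQ2 hindex hfpf h₂
    obtain ⟨P₁, hP₁⟩ := exists_sylow_three_coe_eq_zpowers hQ2 hindex hg₁
    obtain ⟨P₂, hP₂⟩ := exists_sylow_three_coe_eq_zpowers hQ2 hindex hg₂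
    rw [← hP₁, ← hP₂]
    exact P₁.exists_normalizer_eq_map_conj P₂
end

section
/- Let V be a finite GF(2)-module for L ≅ S₃ all of whose composition factors are isomorphic to the natural 2-dimensional module. Then V is a direct sum of copies of the natural module, and the number of irreducible L-submodules of V is 2^m − 1, where dim V = 2m. -/
/-!
Let `σ` be a 3-cycle and `τ` a transposition of `S₃`, and `η = 1 + σ + σ²`. Then `η` is a central
idempotent of `GF(2)[S₃]`. It acts as zero on the natural module: otherwise it acts as the
identity, so `σ` acts trivially and some nonzero vector spans a submodule of order 2. Being
idempotent, `η` then kills every module all of whose composition factors are natural.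

On a module `M` killed by `η` we have `σ² = 1 + σ`. Let `F` be the space of `τ`-fixed vectors.
Then `(a, b) ↦ a + σ b` is a bijection `F × F → M`, and `W ↦ W ∩ F` is an isomorphism from the
lattice of submodules of `M` onto the lattice of `GF(2)`-subspaces of `F`, with `|W| = |W ∩ F|²`.
So simple submodules correspond to the `2^m - 1` lines of `F`, and a basis of `F` splits `M` into
`m` natural modules.
-/

/-- The group algebra `GF(2)[S₃]`; its modules are `GF(2)`-representations of
`L ≅ L₂(2) ≅ S₃`. -/
abbrev GroupAlgS3 := MonoidAlgebra (ZMod 2) (Equiv.Perm (Fin 3))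

/-- The natural 2-dimensional module for `L₂(2) ≅ S₃` over `GF(2)`: the unique
simple `GF(2)[S₃]`-module with 4 elements (the faithful irreducible one). -/
def IsNaturalModule (M : Type*) [AddCommGroup M] [Module GroupAlgS3 M] : Prop :=
  IsSimpleModule GroupAlgS3 M ∧ Nat.card M = 4

section VectorSpace

variable (K E : Type*) [DivisionRing K] [AddCommGroup E] [Module K E]

theorem Submodule.card_atoms_mul_card_sub_one :
    Nat.card {S : Submodule K E // IsAtom S} * (Nat.card K - 1) = Nat.card E - 1 := by
  rw [Projectivization.card K E, Nat.card_congr ((Projectivization.equivSubmodule K E).trans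
    (Equiv.subtypeEquivRight fun _ => Submodule.isAtom_iff_finrank_eq_one.symm))]

theorem Submodule.exists_iSupIndep_isAtom [Module.Finite K E] :
    ∃ A : Fin (Module.finrank K E) → Submodule K E,
      iSupIndep A ∧ iSup A = ⊤ ∧ ∀ i, IsAtom (A i) :=
  let b := Module.finBasis K E
  ⟨fun i => K ∙ b i, b.linearIndependent.iSupIndep_span_singleton,
    by rw [← Submodule.span_range_eq_iSup, b.span_eq], fun i => nonzero_span_atom _ (b.ne_zero i)⟩

end VectorSpace

namespace GroupAlgS3

open Equiv MonoidAlgebra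

noncomputable def σ : GroupAlgS3 := of (ZMod 2) (Perm (Fin 3)) (finRotate 3)

noncomputable def τ : GroupAlgS3 := of (ZMod 2) (Perm (Fin 3)) (swap 0 1)

noncomputable def η : GroupAlgS3 := 1 + σ + σ ^ 2

theorem add_self_eq_zero {M : Type*} [AddCommGroup M] [Module GroupAlgS3 M] (x : M) :
    x + x = 0 := by
  have h : (1 + 1 : ZMod 2) = 0 := rfl
  rw [← one_smul GroupAlgS3 x, ← add_smul, ← one_smul (ZMod 2) (1 : GroupAlgS3), ← add_smul, h,
    zero_smul, zero_smul]

theorem eq_of_add_eq_zero {M : Type*} [AddCommGroup M] [Module GroupAlgS3 M] {x y : M}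
    (h : x + y = 0) : x = y := by
  rw [← add_zero x, ← add_self_eq_zero y, ← add_assoc, h, zero_add]

theorem σ_pow_three : σ ^ 3 = 1 := by
  rw [σ, ← map_pow, show finRotate 3 ^ 3 = 1 by decide, map_one]

theorem σ_mul_σ_sq : σ * σ ^ 2 = 1 := by
  rw [← pow_succ']; exact σ_pow_three

theorem τ_mul_τ : τ * τ = 1 := by
  rw [τ, ← map_mul, swap_mul_self, map_one]

theorem τ_mul_σ : τ * σ = σ ^ 2 * τ := by
  rw [τ, σ, ← map_pow, ← map_mul, ← map_mul]
  congr 1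
  decide

theorem τ_mul_σ_sq : τ * σ ^ 2 = σ * τ := by
  rw [sq, ← mul_assoc, τ_mul_σ, mul_assoc, τ_mul_σ, ← mul_assoc, ← pow_add,
    show 2 + 2 = 3 + 1 from rfl, pow_succ, σ_pow_three, one_mul]

theorem σ_mul_η : σ * η = η := by
  rw [η, mul_add, mul_add, mul_one, ← sq, σ_mul_σ_sq]
  abel

theorem η_mul_σ : η * σ = η := by
  rw [η, add_mul, add_mul, one_mul, ← sq, sq σ, mul_assoc, ← sq, σ_mul_σ_sq]
  abel

theorem η_mul_η : η * η = η := by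
  nth_rewrite 1 [η]
  rw [add_mul, add_mul, one_mul, σ_mul_η, sq, mul_assoc, σ_mul_η, σ_mul_η, add_self_eq_zero,
    zero_add]

theorem τ_mul_η : τ * η = η * τ := by
  rw [η, mul_add, mul_add, add_mul, add_mul, τ_mul_σ, τ_mul_σ_sq, mul_one, one_mul]
  abel

theorem induction_on {P : GroupAlgS3 → Prop} (a : GroupAlgS3) (one : P 1)
    (add : ∀ a b, P a → P b → P (a + b)) (σ_mul : ∀ a, P a → P (σ * a))
    (τ_mul : ∀ a, P a → P (τ * a)) : P a := by
  induction a using MonoidAlgebra.induction_on with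
  | of g =>
    have hσ : P σ := mul_one σ ▸ σ_mul 1 one
    have hτ : P τ := mul_one τ ▸ τ_mul 1 one
    obtain rfl | rfl | rfl | rfl | rfl | rfl : g = 1 ∨ g = finRotate 3 ∨ g = finRotate 3 ^ 2 ∨
        g = swap 0 1 ∨ g = finRotate 3 * swap 0 1 ∨ g = finRotate 3 ^ 2 * swap 0 1 := by
      revert g; decide
    · rwa [map_one]
    · exact hσ
    · rw [map_pow, sq]; exact σ_mul _ hσ
    · exact hτ
    · rw [map_mul]; exact σ_mul _ hτ
    · rw [map_mul, map_pow, sq, mul_assoc]; exact σ_mul _ (σ_mul _ hτ)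
  | add a b ha hb => exact add a b ha hb
  | smul r a ha =>
    obtain rfl | rfl : r = 0 ∨ r = 1 := by revert r; decide
    · rw [zero_smul, ← add_self_eq_zero 1]; exact add _ _ one one
    · rwa [one_smul]

theorem η_mul_comm (a : GroupAlgS3) : η * a = a * η := by
  induction a using induction_on with
  | one => rw [mul_one, one_mul]
  | add a b ha hb => rw [mul_add, add_mul, ha, hb]
  | σ_mul a ha => rw [← mul_assoc, η_mul_σ, ha, mul_assoc, ← ha, ← mul_assoc, σ_mul_η]
  | τ_mul a ha => rw [← mul_assoc, ← τ_mul_η, mul_assoc, ha, mul_assoc]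

section Module

variable {M : Type*} [AddCommGroup M] [Module GroupAlgS3 M]

theorem smul_mem_of_σ_τ {S : AddSubgroup M} (hσ : ∀ x ∈ S, σ • x ∈ S)
    (hτ : ∀ x ∈ S, τ • x ∈ S) (a : GroupAlgS3) {x : M} (hx : x ∈ S) : a • x ∈ S := by
  induction a using induction_on generalizing x with
  | one => rwa [one_smul]
  | add a b ha hb => rw [add_smul]; exact S.add_mem (ha hx) (hb hx)
  | σ_mul a ha => rw [mul_smul]; exact hσ _ (ha hx)
  | τ_mul a ha => rw [mul_smul]; exact hτ _ (ha hx)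

def submoduleOfStable (S : AddSubgroup M) (hσ : ∀ x ∈ S, σ • x ∈ S)
    (hτ : ∀ x ∈ S, τ • x ∈ S) : Submodule GroupAlgS3 M :=
  { S with smul_mem' := fun a _ hx => smul_mem_of_σ_τ hσ hτ a hx }

variable (M) in
noncomputable def ηLinearMap : M →ₗ[GroupAlgS3] M where
  toFun x := η • x
  map_add' := smul_add η
  map_smul' a x := by simp only [smul_smul, η_mul_comm, RingHom.id_apply]

theorem ηLinearMap_apply (x : M) : ηLinearMap M x = η • x := rfl

theorem exists_ne_zero_τ_smul_eq [Nontrivial M] : ∃ v : M, v ≠ 0 ∧ τ • v = v := by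
  obtain ⟨x, hx⟩ := exists_ne (0 : M)
  by_cases h : x + τ • x = 0
  · exact ⟨x, hx, (eq_of_add_eq_zero h).symm⟩
  · refine ⟨x + τ • x, h, ?_⟩
    rw [smul_add, smul_smul, τ_mul_τ, one_smul, add_comm]

theorem card_eq_two_of_fixed_vector [IsSimpleModule GroupAlgS3 M] {v : M} (hv : v ≠ 0)
    (hσ : σ • v = v) (hτ : τ • v = v) : Nat.card M = 2 := by
  have hfix (g : GroupAlgS3) (hg : g • v = v) : ∀ x ∈ AddSubgroup.zmultiples v,
      g • x ∈ AddSubgroup.zmultiples v := by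
    rintro _ ⟨k, rfl⟩
    exact ⟨k, by rw [smul_comm, hg]⟩
  let L := submoduleOfStable _ (hfix σ hσ) (hfix τ hτ)
  have hL : L = ⊤ := (eq_bot_or_eq_top L).resolve_left fun h =>
    hv ((Submodule.eq_bot_iff L).1 h v (AddSubgroup.mem_zmultiples v))
  calc Nat.card M = Nat.card (⊤ : Submodule GroupAlgS3 M) :=
        (Nat.card_congr Submodule.topEquiv.toEquiv).symm
    _ = Nat.card (AddSubgroup.zmultiples v) := by rw [← hL]; rfl
    _ = 2 := by
      rw [Nat.card_zmultiples,
        addOrderOf_eq_prime (by rw [two_nsmul]; exact add_self_eq_zero v) hv]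

theorem η_smul_eq_zero_of_isNaturalModule (hM : IsNaturalModule M) (x : M) : η • x = 0 := by
  have := hM.1
  rcases eq_bot_or_eq_top (LinearMap.ker (ηLinearMap M)) with hker | hker
  swap
  · exact LinearMap.mem_ker.1 (hker ▸ Submodule.mem_top)
  exfalso
  have hη (y : M) : η • y = y := by
    refine eq_of_add_eq_zero ((LinearMap.ker_eq_bot'.1 hker) _ ?_)
    rw [map_add, ηLinearMap_apply, ηLinearMap_apply, smul_smul, η_mul_η, add_self_eq_zero]
  have hσ (y : M) : σ • y = y := by rw [← hη y, smul_smul, σ_mul_η]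
  have := IsSimpleModule.nontrivial GroupAlgS3 M
  obtain ⟨v, hv, hτ⟩ := exists_ne_zero_τ_smul_eq (M := M)
  have := card_eq_two_of_fixed_vector hv (hσ v) hτ
  rw [hM.2] at this
  norm_num at this

theorem η_smul_eq_zero_of_subquotients [Finite M]
    (h : ∀ W₁ W₂ : Submodule GroupAlgS3 M, W₁ ≤ W₂ →
      IsSimpleModule GroupAlgS3 (W₂ ⧸ (W₁.comap W₂.subtype)) →
      ∀ y : W₂ ⧸ (W₁.comap W₂.subtype), η • y = 0) (x : M) : η • x = 0 := by
  suffices hW : ∀ W : Submodule GroupAlgS3 M, W ≤ LinearMap.ker (ηLinearMap M) from hW ⊤ trivial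
  intro W
  induction W using WellFoundedLT.induction with
  | ind W ih =>
  rcases eq_or_ne W ⊥ with rfl | hW
  · exact bot_le
  obtain ⟨U, -, hUW⟩ := exists_le_covBy_of_lt (bot_lt_iff_ne_bot.2 hW)
  have hquot := h U W hUW.le ((covBy_iff_quot_is_simple hUW.le).1 hUW)
  intro y hy
  have hηy : η • y ∈ U := by
    have := hquot (Submodule.Quotient.mk ⟨y, hy⟩)
    rwa [← Submodule.Quotient.mk_smul, Submodule.Quotient.mk_eq_zero] at this
  rw [LinearMap.mem_ker, ηLinearMap_apply, ← η_mul_η, mul_smul]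
  exact ih U hUW.lt hηy

end Module

section Invariants

variable {M : Type*} [AddCommGroup M] [Module GroupAlgS3 M]

/- Not a global instance: on `GroupAlgS3` itself it would clash with the algebra structure. -/
variable (M) in
noncomputable abbrev zmodModule : Module (ZMod 2) M :=
  Module.compHom M (algebraMap (ZMod 2) GroupAlgS3)

attribute [local instance] zmodModule

theorem isScalarTower_zmod : IsScalarTower (ZMod 2) GroupAlgS3 M :=
  ⟨fun r a x => by rw [Algebra.smul_def, mul_smul]; rfl⟩

attribute [local instance] isScalarTower_zmod

variable (M) in
def invariants : Submodule (ZMod 2) M where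
  carrier := {x | τ • x = x}
  add_mem' {x y} (hx : τ • x = x) (hy : τ • y = y) := show τ • (x + y) = x + y by
    rw [smul_add, hx, hy]
  zero_mem' := smul_zero τ
  smul_mem' r x (hx : τ • x = x) := show τ • r • x = r • x by rw [smul_comm, hx]

theorem mem_invariants {x : M} : x ∈ invariants M ↔ τ • x = x := Iff.rfl

theorem τ_smul_σ_smul (x : M) : τ • σ • x = σ ^ 2 • τ • x := by
  rw [smul_smul, τ_mul_σ, mul_smul]

theorem τ_smul_τ_smul (x : M) : τ • τ • x = x := by
  rw [smul_smul, τ_mul_τ, one_smul]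

theorem add_τ_smul_mem_invariants (x : M) : x + τ • x ∈ invariants M := by
  rw [mem_invariants, smul_add, τ_smul_τ_smul, add_comm]

theorem σ_sq_smul (hη : ∀ x : M, η • x = 0) (x : M) : σ ^ 2 • x = x + σ • x := by
  refine (eq_of_add_eq_zero ?_).symm
  rw [← hη x, η, add_smul, add_smul, one_smul]

theorem eq_zero_of_mem_invariants_of_σ_smul_mem (hη : ∀ x : M, η • x = 0) {b : M}
    (hb : b ∈ invariants M) (hσb : σ • b ∈ invariants M) : b = 0 := by
  have h : b + σ • b = σ • b := calc
    b + σ • b = σ ^ 2 • τ • b := by rw [mem_invariants.1 hb, σ_sq_smul hη]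
    _ = τ • σ • b := (τ_smul_σ_smul b).symm
    _ = σ • b := hσb
  exact add_eq_right.1 h

theorem add_σ_smul_mem_invariants (hη : ∀ x : M, η • x = 0) (x : M) :
    x + σ • (x + τ • x) ∈ invariants M := by
  rw [mem_invariants, smul_add, τ_smul_σ_smul, smul_add τ, τ_smul_τ_smul, smul_add,
    σ_sq_smul hη, σ_sq_smul hη]
  calc _ = (τ • x + τ • x) + (x + σ • x + σ • τ • x) := by abel
    _ = _ := by rw [add_self_eq_zero, zero_add, smul_add, add_assoc]

theorem eq_and_eq_of_add_σ_smul_eq (hη : ∀ x : M, η • x = 0) {a b a' b' : M}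
    (ha : a ∈ invariants M) (hb : b ∈ invariants M) (ha' : a' ∈ invariants M)
    (hb' : b' ∈ invariants M) (h : a + σ • b = a' + σ • b') : a = a' ∧ b = b' := by
  have hσ : σ • (b - b') = a' - a := by
    rw [smul_sub, sub_eq_sub_iff_add_eq_add, add_comm, h]
  have hbb' : b = b' := sub_eq_zero.1 <| eq_zero_of_mem_invariants_of_σ_smul_mem hη
    (sub_mem hb hb') (hσ ▸ sub_mem ha' ha)
  exact ⟨add_right_cancel (hbb' ▸ h), hbb'⟩

def ofInvariants (hη : ∀ x : M, η • x = 0) (A : Submodule (ZMod 2) M) (hA : A ≤ invariants M) :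
    Submodule GroupAlgS3 M :=
  submoduleOfStable
    { carrier := {x | ∃ a ∈ A, ∃ b ∈ A, a + σ • b = x}
      add_mem' := by
        rintro _ _ ⟨a, ha, b, hb, rfl⟩ ⟨a', ha', b', hb', rfl⟩
        exact ⟨a + a', A.add_mem ha ha', b + b', A.add_mem hb hb', by rw [smul_add]; abel⟩
      zero_mem' := ⟨0, A.zero_mem, 0, A.zero_mem, by rw [smul_zero, add_zero]⟩
      neg_mem' := by
        rintro _ ⟨a, ha, b, hb, rfl⟩
        exact ⟨-a, A.neg_mem ha, -b, A.neg_mem hb, by rw [smul_neg, neg_add]⟩ }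
    (by
      rintro _ ⟨a, ha, b, hb, rfl⟩
      refine ⟨b, hb, a + b, A.add_mem ha hb, ?_⟩
      rw [smul_add, smul_add, smul_smul, ← sq, σ_sq_smul hη]
      abel)
    (by
      rintro _ ⟨a, ha, b, hb, rfl⟩
      refine ⟨a + b, A.add_mem ha hb, b, hb, ?_⟩
      rw [smul_add, τ_smul_σ_smul, mem_invariants.1 (hA ha), mem_invariants.1 (hA hb),
        σ_sq_smul hη, add_assoc])

theorem mem_ofInvariants (hη : ∀ x : M, η • x = 0) {A : Submodule (ZMod 2) M}
    {hA : A ≤ invariants M} {x : M} :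
    x ∈ ofInvariants hη A hA ↔ ∃ a ∈ A, ∃ b ∈ A, a + σ • b = x := Iff.rfl

theorem ofInvariants_inf_invariants (hη : ∀ x : M, η • x = 0) (W : Submodule GroupAlgS3 M) :
    ofInvariants hη (W.restrictScalars (ZMod 2) ⊓ invariants M) inf_le_right = W := by
  ext x
  refine ⟨?_, fun hx => ?_⟩
  · rintro ⟨a, ha, b, hb, rfl⟩
    exact W.add_mem ha.1 (W.smul_mem σ hb.1)
  · have hb : x + τ • x ∈ W := W.add_mem hx (W.smul_mem τ hx)
    refine ⟨x + σ • (x + τ • x), ⟨W.add_mem hx (W.smul_mem σ hb),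
      add_σ_smul_mem_invariants hη x⟩, x + τ • x, ⟨hb, add_τ_smul_mem_invariants x⟩, ?_⟩
    rw [add_assoc, add_self_eq_zero, add_zero]

theorem inf_invariants_ofInvariants (hη : ∀ x : M, η • x = 0) (A : Submodule (ZMod 2) M)
    (hA : A ≤ invariants M) :
    (ofInvariants hη A hA).restrictScalars (ZMod 2) ⊓ invariants M = A := by
  ext x
  refine ⟨?_, fun hx => ⟨⟨x, hx, 0, A.zero_mem, by rw [smul_zero, add_zero]⟩, hA hx⟩⟩
  rintro ⟨⟨a, ha, b, hb, rfl⟩, hx⟩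
  exact (eq_and_eq_of_add_σ_smul_eq hη (hA ha) (hA hb) hx (zero_mem _)
    (by rw [smul_zero, add_zero])).1 ▸ ha

noncomputable def submoduleOrderIso (hη : ∀ x : M, η • x = 0) :
    Submodule GroupAlgS3 M ≃o Submodule (ZMod 2) (invariants M) :=
  (Equiv.toOrderIso (β := Set.Iic (invariants M))
    { toFun (W : Submodule GroupAlgS3 M) :=
        ⟨W.restrictScalars (ZMod 2) ⊓ invariants M, Set.mem_Iic.2 inf_le_right⟩
      invFun A := ofInvariants hη A A.2
      left_inv := ofInvariants_inf_invariants hη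
      right_inv A := Subtype.ext (inf_invariants_ofInvariants hη A A.2) }
    (fun _ _ h => Subtype.mk_le_mk.2 (inf_le_inf_right _ h))
    (fun A A' h => by
      rintro _ ⟨a, ha, b, hb, rfl⟩
      exact ⟨a, h ha, b, h hb, rfl⟩)).trans (Submodule.MapSubtype.orderIso _).symm

theorem card_eq_card_inf_invariants_sq (hη : ∀ x : M, η • x = 0) (W : Submodule GroupAlgS3 M) :
    Nat.card W = Nat.card ↥(W.restrictScalars (ZMod 2) ⊓ invariants M) ^ 2 := by
  set A := W.restrictScalars (ZMod 2) ⊓ invariants M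
  let f : A × A → W := fun p => ⟨p.1 + σ • p.2, W.add_mem p.1.2.1 (W.smul_mem σ p.2.2.1)⟩
  have hf : Function.Bijective f := by
    refine ⟨fun p q hpq => ?_, fun x => ?_⟩
    · obtain ⟨h1, h2⟩ := eq_and_eq_of_add_σ_smul_eq hη p.1.2.2 p.2.2.2 q.1.2.2 q.2.2.2
        (congrArg Subtype.val hpq)
      exact Prod.ext (Subtype.ext h1) (Subtype.ext h2)
    · have hx : (x : M) ∈ ofInvariants hη A inf_le_right := by
        rw [ofInvariants_inf_invariants hη W]; exact x.2
      obtain ⟨a, ha, b, hb, hab⟩ := (mem_ofInvariants hη).1 hx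
      exact ⟨(⟨a, ha⟩, ⟨b, hb⟩), Subtype.ext hab⟩
  rw [← Nat.card_eq_of_bijective f hf, Nat.card_prod, sq]

theorem card_eq_card_submoduleOrderIso_sq (hη : ∀ x : M, η • x = 0)
    (W : Submodule GroupAlgS3 M) :
    Nat.card W = Nat.card (submoduleOrderIso hη W) ^ 2 := by
  have hmap : (submoduleOrderIso hη W).map (invariants M).subtype =
      W.restrictScalars (ZMod 2) ⊓ invariants M :=
    congrArg Subtype.val ((Submodule.MapSubtype.orderIso _).apply_symm_apply _)
  rw [card_eq_card_inf_invariants_sq hη W, ← hmap,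
    Nat.card_congr (Submodule.equivMapOfInjective _ Subtype.val_injective _).toEquiv.symm]

open Module

theorem card_eq_two_pow (hη : ∀ x : M, η • x = 0) [Finite M] :
    Nat.card M = 2 ^ (2 * finrank (ZMod 2) (invariants M)) := by
  have h := card_eq_card_submoduleOrderIso_sq hη ⊤
  rw [(submoduleOrderIso hη).map_top, Nat.card_congr Submodule.topEquiv.toEquiv,
    Nat.card_congr Submodule.topEquiv.toEquiv] at h
  rw [h, natCard_eq_pow_finrank (K := ZMod 2) (V := invariants M), Nat.card_zmod, pow_mul']

theorem card_simple_submodules (hη : ∀ x : M, η • x = 0) [Finite M] :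
    Nat.card {W : Submodule GroupAlgS3 M // IsSimpleModule GroupAlgS3 W} =
      2 ^ finrank (ZMod 2) (invariants M) - 1 := by
  have h := Submodule.card_atoms_mul_card_sub_one (ZMod 2) (invariants M)
  rw [Nat.card_zmod, show 2 - 1 = 1 from rfl, mul_one,
    natCard_eq_pow_finrank (K := ZMod 2) (V := invariants M), Nat.card_zmod] at h
  rw [← h]
  exact Nat.card_congr ((Equiv.subtypeEquivRight fun _ => isSimpleModule_iff_isAtom).trans
    ((submoduleOrderIso hη).toEquiv.subtypeEquiv fun W =>
      ((submoduleOrderIso hη).isAtom_iff W).symm))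

theorem exists_isInternal_isNaturalModule (hη : ∀ x : M, η • x = 0) [Finite M] :
    ∃ D : Fin (finrank (ZMod 2) (invariants M)) → Submodule GroupAlgS3 M,
      DirectSum.IsInternal D ∧ ∀ i, IsNaturalModule (D i) := by
  obtain ⟨A, hind, htop, hatom⟩ := Submodule.exists_iSupIndep_isAtom (ZMod 2) (invariants M)
  set e := submoduleOrderIso hη
  refine ⟨fun i => e.symm (A i), ?_, fun i => ⟨?_, ?_⟩⟩
  · rw [DirectSum.isInternal_submodule_iff_iSupIndep_and_iSup_eq_top]
    exact ⟨(iSupIndep_map_orderIso_iff e.symm).2 hind,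
      by rw [← e.symm.map_iSup, htop, e.symm.map_top]⟩
  · exact isSimpleModule_iff_isAtom.2 ((e.symm.isAtom_iff _).2 (hatom i))
  · rw [card_eq_card_submoduleOrderIso_sq hη, e.apply_symm_apply,
      natCard_eq_pow_finrank (K := ZMod 2), Submodule.isAtom_iff_finrank_eq_one.1 (hatom i),
      Nat.card_zmod]
    rfl

end Invariants

end GroupAlgS3

open GroupAlgS3

/-- a finite `GF(2)`-module `V` for `S₃` of dimension `2m` all of whose
composition factors (simple subquotients) are natural is a direct sum of `m` copies
of the natural module, and `V` has exactly `2^m - 1` irreducible submodules. -/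
theorem stmt2 (V : Type*) [AddCommGroup V] [Module GroupAlgS3 V] (m : ℕ)
    (hV : Nat.card V = 2 ^ (2 * m))
    (hcomp : ∀ W₁ W₂ : Submodule GroupAlgS3 V, W₁ ≤ W₂ →
      IsSimpleModule GroupAlgS3 (W₂ ⧸ (W₁.comap W₂.subtype)) →
      IsNaturalModule (W₂ ⧸ (W₁.comap W₂.subtype))) :
    (∃ D : Fin m → Submodule GroupAlgS3 V,
        DirectSum.IsInternal D ∧ ∀ i, IsNaturalModule (D i)) ∧
      Nat.card {W : Submodule GroupAlgS3 V // IsSimpleModule GroupAlgS3 W} =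
        2 ^ m - 1 := by
  have : Finite V := Nat.finite_of_card_ne_zero (by rw [hV]; positivity)
  have hη := η_smul_eq_zero_of_subquotients fun W₁ W₂ hle hsimple =>
    η_smul_eq_zero_of_isNaturalModule (hcomp W₁ W₂ hle hsimple)
  have hm : Module.finrank (ZMod 2) (invariants V) = m :=
    Nat.eq_of_mul_eq_mul_left two_pos
      (Nat.pow_right_injective le_rfl ((card_eq_two_pow hη).symm.trans hV))
  subst hm
  exact ⟨exists_isInternal_isNaturalModule hη, card_simple_submodules hη⟩
end

section
/- Let G = Q:L be a biextraspecial group and D a dent of G. Then D is abelian, and D is isomorphic either to the elementary abelian group 2⁴ or to C₄ × C₄. -/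
open scoped commutatorElement

/-- The centre of the subgroup `Q`, viewed as a subgroup of the ambient group `G`. -/
def centerOf (G : Type*) [Group G] (Q : Subgroup G) : Subgroup G :=
  Subgroup.centralizer (Q : Set G) ⊓ Q

/-- A biextraspecial group of rank `m`: `G` is an extension of a special 2-group
`Q` of order `2^(2+2m)` by `L₂(2) ≅ S₃`, the centre `Z = Z(Q) ≅ 2²` is the natural
module (elementary abelian of order 4 with faithful induced `G/Q`-action), `Q/Z` is
elementary abelian, and every element of order 3 acts fixed-point-freely on `Q`
(equivalently, `Q/Z` has only natural composition factors). -/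
structure IsBiextraspecial (G : Type*) [Group G] (Q : Subgroup G) (m : ℕ) : Prop where
  normal : Q.Normal
  card_Q : Nat.card Q = 2 ^ (2 + 2 * m)
  quot_iso : Nonempty ((G ⧸ Q) ≃* Equiv.Perm (Fin 3))
  card_center : Nat.card (centerOf G Q) = 4
  center_exponent : ∀ z ∈ centerOf G Q, z * z = 1
  center_faithful : ∀ g : G, (∀ z ∈ centerOf G Q, g * z * g⁻¹ = z) → g ∈ Q
  sq_mem_center : ∀ q ∈ Q, q * q ∈ centerOf G Q
  comm_mem_center : ∀ q ∈ Q, ∀ r ∈ Q, ⁅q, r⁆ ∈ centerOf G Q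
  order_three_fpf : ∀ g : G, orderOf g = 3 → ∀ q ∈ Q, g * q * g⁻¹ = q → q = 1

/-- A dent: a normal subgroup `D` of `G` with `Z(Q) < D < Q` such that `D/Z` is an
irreducible `L`-submodule of `Q/Z` (i.e. `D` is minimal among normal subgroups
strictly containing `Z(Q)`). -/
structure IsDent (G : Type*) [Group G] (Q D : Subgroup G) : Prop where
  normal : D.Normal
  center_lt : centerOf G Q < D
  lt_Q : D < Q
  minimal : ∀ E : Subgroup G, E.Normal → centerOf G Q < E → E ≤ D → E = D

/-- `D₃` is the diagonal dent of the distinct dents `D₁` and `D₂`: the unique third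
dent contained in `D₁D₂`. -/
def IsDiagonal (G : Type*) [Group G] (Q D₁ D₂ D₃ : Subgroup G) : Prop :=
  IsDent G Q D₁ ∧ IsDent G Q D₂ ∧ IsDent G Q D₃ ∧
    D₁ ≠ D₂ ∧ D₃ ≠ D₁ ∧ D₃ ≠ D₂ ∧ D₃ ≤ D₁ ⊔ D₂

/-- Two subgroups commute elementwise, i.e. `[D₁, D₂] = 1`. -/
def DentsCommute (G : Type*) [Group G] (D₁ D₂ : Subgroup G) : Prop :=
  ∀ d₁ ∈ D₁, ∀ d₂ ∈ D₂, d₁ * d₂ = d₂ * d₁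

/-- A dent is singular when it is elementary abelian (of type `2⁴`). -/
def IsSingularDent (G : Type*) [Group G] (D : Subgroup G) : Prop :=
  ∀ d ∈ D, d * d = 1

/-- A standard basis `x, y` of a dent `D` with respect to `L = ⟨s, t⟩`:
`D = ⟨x, y, Z⟩` with `xᵗ = x`, `xˢ = y` and `yˢ = xy` (singular case) or
`yˢ = x⁻¹y⁻¹` (non-singular case). -/
structure StdBasis (G : Type*) [Group G] (Q : Subgroup G) (s t : G)
    (D : Subgroup G) (x y : G) : Prop where
  x_mem : x ∈ D
  x_notin : x ∉ centerOf G Q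
  gen : D = centerOf G Q ⊔ Subgroup.closure {x, y}
  t_fix : t * x * t⁻¹ = x
  s_x : s * x * s⁻¹ = y
  s_y : s * y * s⁻¹ = x * y ∨ s * y * s⁻¹ = x⁻¹ * y⁻¹

/-!
Write `Z = Z(Q)`. The quotient `Q / Z` is an elementary abelian 2-group on which `Q` acts
trivially, and an element `h` of order 3 acts on it without fixed points, so that
`a · aʰ · aʰʰ = 1` for every `a ∈ Q / Z`. A lift `t` of a transposition of `G / Q ≅ S₃` inverts
`h` modulo `Q`; starting from any element of `D ∖ Z` one finds `u ∈ D ∖ Z` fixed by `t` modulo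
`Z`, and then `⟨u, uʰ⟩Z` is normalised by `Q`, `h` and `t`, which generate `G`. Minimality of `D`
gives `D = ⟨u, uʰ⟩Z`, of order 16.

The commutator `[u, uʰ] ∈ Z` is fixed by `h`, hence trivial, so `D` is abelian. Finally
`u² ∈ Z` and `(uʰ)² = (u²)ʰ`: either `u² = 1` and `D` is elementary abelian, or `u²` and `(u²)ʰ`
are distinct involutions of `Z` and `D ≅ C₄ × C₄`.
-/

open Subgroup

section GroupLemmas

variable {G : Type*} [Group G]

theorem Equiv.Perm.swap_mul_mul_swap_eq_inv_of_pow_three :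
    ∀ x : Equiv.Perm (Fin 3), x ^ 3 = 1 → swap 0 1 * x * swap 0 1 = x⁻¹ := by
  decide

theorem Subgroup.eq_top_of_orderOf_eq_three_of_orderOf_eq_two (hcard : Nat.card G = 6)
    (K : Subgroup G) {x y : G} (hxK : x ∈ K) (hyK : y ∈ K) (hx : orderOf x = 3)
    (hy : orderOf y = 2) : K = ⊤ := by
  have : Finite G := Nat.finite_of_card_ne_zero (by omega)
  have h3 : 3 ∣ Nat.card K := hx ▸ K.orderOf_dvd_natCard hxK
  have h2 : 2 ∣ Nat.card K := hy ▸ K.orderOf_dvd_natCard hyK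
  refine K.eq_top_of_card_eq (Nat.dvd_antisymm K.card_subgroup_dvd_card ?_)
  rw [hcard]
  exact Nat.Coprime.mul_dvd_of_dvd_of_dvd (by norm_num) h2 h3

theorem conj_mul_inv_eq_of_inv_mul_conj_eq {g a b : G}
    (h : a⁻¹ * (g * a * g⁻¹) = b⁻¹ * (g * b * g⁻¹)) : g * (b * a⁻¹) * g⁻¹ = b * a⁻¹ :=
  calc g * (b * a⁻¹) * g⁻¹ = b * (b⁻¹ * (g * b * g⁻¹)) * (g * a * g⁻¹)⁻¹ := by group
    _ = b * a⁻¹ := by rw [← h]; group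

/-- The map `z ↦ z⁻¹ zᵍ` is injective on `Z`, hence onto, so `x⁻¹ xᵍ = z⁻¹ zᵍ` for some `z ∈ Z`,
and then `x z⁻¹` is a fixed point. -/
theorem mem_of_inv_mul_conj_mem {Q Z : Subgroup G} [Finite Z] {g x : G} (hZQ : Z ≤ Q)
    (hgZ : ∀ z ∈ Z, g * z * g⁻¹ ∈ Z) (hfix : ∀ q ∈ Q, g * q * g⁻¹ = q → q = 1)
    (hx : x ∈ Q) (hxZ : x⁻¹ * (g * x * g⁻¹) ∈ Z) : x ∈ Z := by
  let f : Z → Z := fun z ↦ ⟨z⁻¹ * (g * z * g⁻¹), mul_mem (inv_mem z.2) (hgZ z z.2)⟩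
  have hf : f.Injective := fun z₁ z₂ h ↦ by
    have := hfix _ (hZQ (mul_mem z₂.2 (inv_mem z₁.2)))
      (conj_mul_inv_eq_of_inv_mul_conj_eq (congrArg Subtype.val h))
    exact Subtype.ext (mul_inv_eq_one.mp this).symm
  obtain ⟨z, hz⟩ := Finite.injective_iff_surjective.mp hf ⟨_, hxZ⟩
  have := hfix _ (mul_mem hx (inv_mem (hZQ z.2)))
    (conj_mul_inv_eq_of_inv_mul_conj_eq (congrArg Subtype.val hz))
  exact mul_inv_eq_one.mp this ▸ z.2

/-- `a · aᵍ · aᵍᵍ` is fixed by `g`, hence trivial. -/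
theorem conj_conj_eq_mul_conj {A : Subgroup G} {g a : G}
    (hcomm : ∀ x ∈ A, ∀ y ∈ A, x * y = y * x) (hsq : ∀ x ∈ A, x * x = 1)
    (hgA : ∀ x ∈ A, g * x * g⁻¹ ∈ A) (hfix : ∀ x ∈ A, g * x * g⁻¹ = x → x = 1)
    (hg : g ^ 3 = 1) (ha : a ∈ A) : g * (g * a * g⁻¹) * g⁻¹ = a * (g * a * g⁻¹) := by
  set b := g * a * g⁻¹
  set c := g * b * g⁻¹
  have hb : b ∈ A := hgA a ha
  have hc : c ∈ A := hgA b hb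
  have hgc : g * c * g⁻¹ = a :=
    calc g * c * g⁻¹ = (g * g * g) * a * (g * g * g)⁻¹ := by
          simp only [c, b, mul_inv_rev, mul_assoc]
      _ = a := by rw [← pow_three', hg, one_mul, inv_one, mul_one]
  have habc : a * b * c = 1 := by
    refine hfix _ (mul_mem (mul_mem ha hb) hc) ?_
    calc g * (a * b * c) * g⁻¹ = b * c * (g * c * g⁻¹) := by simp only [c, b]; group
      _ = a * b * c := by rw [hgc, hcomm _ (mul_mem hb hc) _ ha, ← mul_assoc]
  calc c = (a * b)⁻¹ := eq_inv_of_mul_eq_one_right habc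
    _ = a * b := by
      rw [mul_inv_rev, inv_eq_of_mul_eq_one_right (hsq a ha),
        inv_eq_of_mul_eq_one_right (hsq b hb), hcomm b hb a ha]

theorem conj_mem_closure_of_forall_conj_mem {S : Set G} {g n : G}
    (hS : ∀ s ∈ S, g * s * g⁻¹ ∈ closure S) (hn : n ∈ closure S) : g * n * g⁻¹ ∈ closure S := by
  have : closure S ≤ (closure S).comap (MulAut.conj g).toMonoidHom :=
    (closure_le _).mpr fun s hs ↦ by simpa using hS s hs
  simpa using this hn

theorem mem_closure_pair_of_mul_self_eq_one {x y g : G} (hx : x * x = 1) (hy : y * y = 1)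
    (hxy : x * y = y * x) (hg : g ∈ closure {x, y}) : g = 1 ∨ g = x ∨ g = y ∨ g = x * y := by
  have hxxy : x * (x * y) = y := by rw [← mul_assoc, hx, one_mul]
  have hyxy : y * (x * y) = x := by rw [hxy, ← mul_assoc, hy, one_mul]
  have hxyx : x * y * x = y := by rw [hxy, mul_assoc, hx, mul_one]
  have hxyy : x * y * y = x := by rw [mul_assoc, hy, mul_one]
  have hxyxy : x * y * (x * y) = 1 := by rw [mul_assoc, hyxy, hx]
  induction hg using closure_induction with
  | mem g hg => rcases hg with rfl | rfl <;> simp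
  | one => simp
  | mul a b _ _ ha hb =>
    rcases ha with rfl | rfl | rfl | rfl <;> rcases hb with rfl | rfl | rfl | rfl <;>
      simp only [one_mul, mul_one, hx, hy, ← hxy, hxxy, hyxy, hxyx, hxyy, hxyxy, true_or, or_true]
  | inv a _ ha =>
    rcases ha with rfl | rfl | rfl | rfl <;>
      simp only [inv_one, inv_eq_of_mul_eq_one_right hx, inv_eq_of_mul_eq_one_right hy,
        inv_eq_of_mul_eq_one_right hxyxy, true_or, or_true]

theorem Subgroup.card_closure_pair_of_mul_self_eq_one {x y : G} (hx : x * x = 1)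
    (hy : y * y = 1) (hxy : x * y = y * x) (hx1 : x ≠ 1) (hy1 : y ≠ 1) (hne : x ≠ y) :
    Nat.card (closure {x, y}) = 4 := by
  have hS : (closure {x, y} : Set G) = {1, x, y, x * y} := by
    refine subset_antisymm (fun g hg ↦ mem_closure_pair_of_mul_self_eq_one hx hy hxy hg) ?_
    rintro g (rfl | rfl | rfl | rfl)
    exacts [one_mem _, subset_closure (.inl rfl), subset_closure (.inr rfl),
      mul_mem (subset_closure (.inl rfl)) (subset_closure (.inr rfl))]
  have hxy1 : x * y ≠ 1 := fun h ↦ hne (eq_inv_of_mul_eq_one_left h ▸ inv_eq_of_mul_eq_one_right hy)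
  rw [← SetLike.coe_sort_coe, hS, Nat.card_coe_set_eq]
  rw [Set.ncard_insert_of_notMem, Set.ncard_insert_of_notMem, Set.ncard_pair]
  · exact fun h ↦ hx1 (right_eq_mul.mp h)
  · simp [hne, hy1]
  · simp [hx1.symm, hy1.symm, hxy1.symm]

theorem Subgroup.card_comap_mk' {N : Subgroup G} [N.Normal] (K : Subgroup (G ⧸ N)) :
    Nat.card (K.comap (QuotientGroup.mk' N)) = Nat.card N * Nat.card K := by
  set D := K.comap (QuotientGroup.mk' N)
  have hND : N ≤ D := fun n hn ↦ by simp [D, (QuotientGroup.eq_one_iff n).mpr hn]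
  have hrel : N.relIndex D = Nat.card K := by
    simpa [D, QuotientGroup.ker_mk',
      map_comap_eq_self_of_surjective (QuotientGroup.mk'_surjective N)] using
      relIndex_ker D (QuotientGroup.mk' N)
  rw [← (N.subgroupOf D).card_mul_index, Nat.card_congr (subgroupOfEquivOfLe hND).toEquiv,
    ← relIndex, hrel]

theorem mul_self_eq_one_of_mem_closure {S : Set G} (hcomm : ∀ x ∈ S, ∀ y ∈ S, x * y = y * x)
    (hsq : ∀ x ∈ S, x * x = 1) {g : G} (hg : g ∈ closure S) : g * g = 1 := by
  have := isMulCommutative_closure hcomm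
  induction hg using closure_induction with
  | mem x hx => exact hsq x hx
  | one => exact mul_one 1
  | mul a b ha hb ha2 hb2 =>
    rw [mul_assoc, ← mul_assoc b, ← setLike_mul_comm ha hb, mul_assoc, ← mul_assoc, ha2, hb2,
      one_mul]
  | inv a _ ha2 => rw [← mul_inv_rev, ha2, inv_one]

end GroupLemmas

theorem nonempty_mulEquiv_of_pow_eq_one (p : ℕ) [Fact p.Prime] {A B : Type*} [CommGroup A]
    [CommGroup B] [Finite A] [Finite B] (hA : ∀ a : A, a ^ p = 1) (hB : ∀ b : B, b ^ p = 1)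
    (hcard : Nat.card A = Nat.card B) : Nonempty (A ≃* B) := by
  have _ := AddCommGroup.zmodModule (G := Additive A) fun a ↦ congrArg Additive.ofMul (hA a.toMul)
  have _ := AddCommGroup.zmodModule (G := Additive B) fun b ↦ congrArg Additive.ofMul (hB b.toMul)
  have hA' : Nat.card (Additive A) = Nat.card (ZMod p) ^ Module.finrank (ZMod p) (Additive A) :=
    Module.natCard_eq_pow_finrank
  have hB' : Nat.card (Additive B) = Nat.card (ZMod p) ^ Module.finrank (ZMod p) (Additive B) :=
    Module.natCard_eq_pow_finrank
  rw [Nat.card_zmod] at hA' hB'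
  have hrank : Module.finrank (ZMod p) (Additive A) = Module.finrank (ZMod p) (Additive B) :=
    Nat.pow_right_injective (Fact.out : p.Prime).two_le (hA'.symm.trans (hcard.trans hB'))
  exact ⟨(LinearEquiv.ofFinrankEq _ _ hrank).toAddEquiv.toMultiplicative⟩

open Multiplicative in
theorem exists_monoidHom_zmod_prod {A : Type*} [CommGroup A] {n : ℕ} {a b : A} (ha : a ^ n = 1)
    (hb : b ^ n = 1) :
    ∃ φ : Multiplicative (ZMod n × ZMod n) →* A, φ (ofAdd (1, 0)) = a ∧ φ (ofAdd (0, 1)) = b := by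
  let lift (c : A) (hc : c ^ n = 1) : ZMod n →+ Additive A :=
    ZMod.lift n ⟨zmultiplesHom _ (Additive.ofMul c), by simpa using congrArg Additive.ofMul hc⟩
  have lift_one (c : A) (hc : c ^ n = 1) : lift c hc 1 = Additive.ofMul c := by
    rw [← Int.cast_one, ZMod.lift_coe]
    simp
  refine ⟨AddMonoidHom.toMultiplicativeLeft ((lift a ha).coprod (lift b hb)), ?_, ?_⟩ <;>
    simp [lift_one]

open Multiplicative in
theorem injective_zmod_four_prod_of_sq_ne_one {H : Type*} [Group H]
    (φ : Multiplicative (ZMod 4 × ZMod 4) →* H)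
    (h₁ : φ (ofAdd (1, 0)) ^ 2 ≠ 1) (h₂ : φ (ofAdd (0, 1)) ^ 2 ≠ 1)
    (h₃ : (φ (ofAdd (1, 0)) * φ (ofAdd (0, 1))) ^ 2 ≠ 1) : Function.Injective φ := by
  -- every nontrivial `x` has `x` or `x²` among the three involutions
  have key : ∀ x : Multiplicative (ZMod 4 × ZMod 4), x ≠ 1 →
      ∃ y ∈ ({ofAdd (1, 0) ^ 2, ofAdd (0, 1) ^ 2, (ofAdd (1, 0) * ofAdd (0, 1)) ^ 2} :
        Finset (Multiplicative (ZMod 4 × ZMod 4))), y = x ∨ y = x ^ 2 := by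
    decide
  refine (injective_iff_map_eq_one φ).mpr fun x hx ↦ by_contra fun hx1 ↦ ?_
  obtain ⟨y, hy, hyx⟩ := key x hx1
  have hφy : φ y = 1 := by rcases hyx with rfl | rfl <;> simp [hx]
  simp only [Finset.mem_insert, Finset.mem_singleton] at hy
  rcases hy with rfl | rfl | rfl <;> simp_all

open Multiplicative in
theorem nonempty_mulEquiv_zmod_four_prod {A : Type*} [CommGroup A] [Finite A]
    (hcard : Nat.card A = 16) {a b : A} (ha : a ^ 4 = 1) (hb : b ^ 4 = 1) (ha2 : a ^ 2 ≠ 1)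
    (hb2 : b ^ 2 ≠ 1) (hab : (a * b) ^ 2 ≠ 1) :
    Nonempty (A ≃* Multiplicative (ZMod 4 × ZMod 4)) := by
  obtain ⟨φ, hφa, hφb⟩ := exists_monoidHom_zmod_prod ha hb
  have hinj := injective_zmod_four_prod_of_sq_ne_one φ (hφa ▸ ha2) (hφb ▸ hb2) (hφa ▸ hφb ▸ hab)
  have hbij := hinj.bijective_of_nat_card_le <| by
    rw [hcard, Nat.card_congr Multiplicative.toAdd, Nat.card_prod, Nat.card_zmod]
  exact ⟨(MulEquiv.ofBijective φ hbij).symm⟩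

section CenterOf

variable {G : Type*} [Group G] {Q : Subgroup G}

theorem centerOf_le : centerOf G Q ≤ Q := inf_le_right

theorem mul_comm_of_mem_centerOf {z q : G} (hz : z ∈ centerOf G Q) (hq : q ∈ Q) :
    q * z = z * q :=
  mem_centralizer_iff.mp hz.1 q hq

instance [Q.Normal] : (centerOf G Q).Normal := normal_inf_normal _ _

end CenterOf

namespace IsBiextraspecial

variable {G : Type*} [Group G] {Q : Subgroup G} {m : ℕ}

theorem card_quotient (hG : IsBiextraspecial G Q m) : Nat.card (G ⧸ Q) = 6 := by
  have := hG.normal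
  rw [Nat.card_congr hG.quot_iso.some.toEquiv, Nat.card_perm, Nat.card_fin]
  rfl

theorem finite (hG : IsBiextraspecial G Q m) : Finite G :=
  Nat.finite_of_card_ne_zero <| by
    rw [Q.card_eq_card_quotient_mul_card_subgroup, hG.card_quotient, hG.card_Q]
    positivity

theorem exists_orderOf_eq_three (hG : IsBiextraspecial G Q m) : ∃ h : G, orderOf h = 3 := by
  have := hG.finite
  refine exists_prime_orderOf_dvd_card' 3 ?_
  rw [Q.card_eq_card_quotient_mul_card_subgroup, hG.card_quotient]
  exact Dvd.dvd.mul_right (by norm_num) _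

theorem notMem_of_orderOf_eq_three (hG : IsBiextraspecial G Q m) {h : G} (hh : orderOf h = 3) :
    h ∉ Q := fun hQ ↦ by
  have : 3 ∣ 2 ^ (2 + 2 * m) := hG.card_Q ▸ hh ▸ Q.orderOf_dvd_natCard hQ
  exact absurd (Nat.prime_three.dvd_of_dvd_pow this) (by norm_num)

/-- `t` lifts a transposition of `G / Q ≅ S₃`. -/
theorem exists_conj_mul_mem (hG : IsBiextraspecial G Q m) :
    ∃ t : G, t ∉ Q ∧ t * t ∈ Q ∧ ∀ h : G, h ^ 3 = 1 → t * h * t⁻¹ * h ∈ Q := by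
  obtain ⟨e⟩ := hG.quot_iso
  have := hG.normal
  obtain ⟨t, ht⟩ := QuotientGroup.mk_surjective (e.symm (Equiv.swap 0 1))
  refine ⟨t, ?_, ?_, fun h hh ↦ ?_⟩ <;> rw [← QuotientGroup.eq_one_iff]
  · rw [ht, MulEquiv.map_eq_one_iff]
    decide
  · rw [QuotientGroup.mk_mul, ht, ← map_mul, Equiv.swap_mul_self, map_one]
  · apply e.injective
    have h3 : e h ^ 3 = 1 := by
      rw [← map_pow, ← QuotientGroup.mk_pow, hh, QuotientGroup.mk_one, map_one]
    simp only [QuotientGroup.mk_mul, QuotientGroup.mk_inv, ht, map_mul, map_inv,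
      MulEquiv.apply_symm_apply, Equiv.swap_inv, map_one]
    rw [Equiv.Perm.swap_mul_mul_swap_eq_inv_of_pow_three _ h3, inv_mul_cancel]

theorem eq_top_of_le (hG : IsBiextraspecial G Q m) {K : Subgroup G} (hQK : Q ≤ K) {h t : G}
    (hh : orderOf h = 3) (hhK : h ∈ K) (htQ : t ∉ Q) (ht2 : t * t ∈ Q) (htK : t ∈ K) : K = ⊤ := by
  have := hG.normal
  have hmap : K.map (QuotientGroup.mk' Q) = ⊤ := by
    refine eq_top_of_orderOf_eq_three_of_orderOf_eq_two hG.card_quotient _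
      (mem_map_of_mem _ hhK) (mem_map_of_mem _ htK) (orderOf_eq_prime ?_ ?_)
      (orderOf_eq_prime ?_ ?_)
    · rw [← map_pow, ← hh, pow_orderOf_eq_one, map_one]
    · simpa [QuotientGroup.eq_one_iff] using hG.notMem_of_orderOf_eq_three hh
    · rwa [sq, ← map_mul, QuotientGroup.mk'_apply, QuotientGroup.eq_one_iff]
    · simpa [QuotientGroup.eq_one_iff] using htQ
  have hker : (QuotientGroup.mk' Q).ker ≤ K := by rwa [QuotientGroup.ker_mk']
  rw [← sup_eq_left.mpr hker, ← comap_map_eq, hmap, comap_top]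

theorem pow_four_eq_one (hG : IsBiextraspecial G Q m) {u : G} (hu : u ∈ Q) : u ^ 4 = 1 := by
  rw [show 4 = 2 * 2 from rfl, pow_mul, sq u, sq]
  exact hG.center_exponent _ (hG.sq_mem_center u hu)

theorem mul_self_mul_mul_self_conj_ne_one (hG : IsBiextraspecial G Q m) {h u : G}
    (hh : orderOf h = 3) (hu : u ∈ Q) (hu2 : u * u ≠ 1) :
    u * u * (h * u * h⁻¹ * (h * u * h⁻¹)) ≠ 1 := fun h1 ↦ hu2 <| by
  have hz := hG.sq_mem_center u hu
  refine hG.order_three_fpf h hh _ (centerOf_le hz) ?_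
  calc h * (u * u) * h⁻¹ = h * u * h⁻¹ * (h * u * h⁻¹) := by group
    _ = (u * u)⁻¹ := eq_inv_of_mul_eq_one_right h1
    _ = u * u := inv_eq_of_mul_eq_one_right (hG.center_exponent _ hz)

section Quotient

variable [Q.Normal]

local notation "π" => QuotientGroup.mk' (centerOf G Q)

theorem mul_self_eq_one_of_mem_map (hG : IsBiextraspecial G Q m) {x : G ⧸ centerOf G Q}
    (hx : x ∈ Q.map π) : x * x = 1 := by
  obtain ⟨q, hq, rfl⟩ := hx
  rw [← map_mul, QuotientGroup.mk'_apply, QuotientGroup.eq_one_iff]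
  exact hG.sq_mem_center q hq

theorem mul_comm_of_mem_map (hG : IsBiextraspecial G Q m) {x y : G ⧸ centerOf G Q}
    (hx : x ∈ Q.map π) (hy : y ∈ Q.map π) : x * y = y * x := by
  obtain ⟨q, hq, rfl⟩ := hx
  obtain ⟨r, hr, rfl⟩ := hy
  rw [← map_mul, ← map_mul, QuotientGroup.mk'_apply, QuotientGroup.mk'_apply, QuotientGroup.eq]
  have : (q * r)⁻¹ * (r * q) = ⁅r⁻¹, q⁻¹⁆ := by rw [commutatorElement_def]; group
  exact this ▸ hG.comm_mem_center _ (inv_mem hr) _ (inv_mem hq)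

theorem conj_eq_of_mem_map (hG : IsBiextraspecial G Q m) {q : G} (hq : q ∈ Q)
    {x : G ⧸ centerOf G Q} (hx : x ∈ Q.map π) : π q * x * (π q)⁻¹ = x := by
  rw [hG.mul_comm_of_mem_map (mem_map_of_mem _ hq) hx, mul_inv_cancel_right]

theorem eq_one_of_conj_eq (hG : IsBiextraspecial G Q m) {h : G} (hh : orderOf h = 3)
    {x : G ⧸ centerOf G Q} (hx : x ∈ Q.map π) (hfix : π h * x * (π h)⁻¹ = x) : x = 1 := by
  obtain ⟨q, hq, rfl⟩ := hx
  have : Finite (centerOf G Q) := Nat.finite_of_card_ne_zero (by rw [hG.card_center]; norm_num)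
  rw [QuotientGroup.mk'_apply, QuotientGroup.eq_one_iff]
  refine mem_of_inv_mul_conj_mem centerOf_le (fun z hz ↦ Normal.conj_mem inferInstance z hz h)
    (hG.order_three_fpf h hh) hq ?_
  rw [← QuotientGroup.eq]
  simpa using hfix.symm

theorem mk'_conj_conj_eq (hG : IsBiextraspecial G Q m) {h u : G} (hh : orderOf h = 3)
    (hu : u ∈ Q) : π (h * (h * u * h⁻¹) * h⁻¹) = π u * π (h * u * h⁻¹) := by
  simp only [map_mul, map_inv]
  exact conj_conj_eq_mul_conj (A := Q.map π) (fun _ hx _ hy ↦ hG.mul_comm_of_mem_map hx hy)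
    (fun _ hx ↦ hG.mul_self_eq_one_of_mem_map hx)
    (fun x hx ↦ (hG.normal.map π (QuotientGroup.mk'_surjective _)).conj_mem x hx (π h))
    (fun _ hx ↦ hG.eq_one_of_conj_eq hh hx)
    (by rw [← map_pow, ← hh, pow_orderOf_eq_one, map_one]) (mem_map_of_mem _ hu)

/-- Modulo `Q`, `t h t⁻¹ = h⁻¹ = h²`, and `Q` acts trivially on `Q / Z`. -/
theorem mk'_conj_conj_eq_of_conj_mul_mem (hG : IsBiextraspecial G Q m) {h t u : G}
    (hh : orderOf h = 3) (hth : t * h * t⁻¹ * h ∈ Q) (hu : u ∈ Q) (htu : π (t * u * t⁻¹) = π u) :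
    π (t * (h * u * h⁻¹) * t⁻¹) = π u * π (h * u * h⁻¹) := by
  have hinv : π h⁻¹ = π h * π h := by
    rw [inv_eq_of_mul_eq_one_right (by rw [← pow_three, ← hh, pow_orderOf_eq_one]), map_mul]
  have hmem : π h⁻¹ * π u * (π h⁻¹)⁻¹ ∈ Q.map π :=
    (hG.normal.map π (QuotientGroup.mk'_surjective _)).conj_mem _ (mem_map_of_mem π hu) _
  calc π (t * (h * u * h⁻¹) * t⁻¹)
      = π (t * h * t⁻¹ * h) * (π h⁻¹ * π (t * u * t⁻¹) * (π h⁻¹)⁻¹) * (π (t * h * t⁻¹ * h))⁻¹ := by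
        simp only [map_mul, map_inv]; group
    _ = π h⁻¹ * π u * (π h⁻¹)⁻¹ := by rw [htu, hG.conj_eq_of_mem_map hth hmem]
    _ = π (h * (h * u * h⁻¹) * h⁻¹) := by rw [hinv]; simp only [map_mul, map_inv]; group
    _ = π u * π (h * u * h⁻¹) := hG.mk'_conj_conj_eq hh hu

theorem card_closure_mk'_pair (hG : IsBiextraspecial G Q m) {h u : G} (hh : orderOf h = 3)
    (hu : u ∈ Q) (huZ : u ∉ centerOf G Q) : Nat.card (closure {π u, π (h * u * h⁻¹)}) = 4 := by
  have hu' := mem_map_of_mem π hu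
  have hw' := mem_map_of_mem π (hG.normal.conj_mem u hu h)
  have hu1 : π u ≠ 1 := by rwa [Ne, QuotientGroup.mk'_apply, QuotientGroup.eq_one_iff]
  refine card_closure_pair_of_mul_self_eq_one (hG.mul_self_eq_one_of_mem_map hu')
    (hG.mul_self_eq_one_of_mem_map hw') (hG.mul_comm_of_mem_map hu' hw') hu1 ?_ ?_
  · simpa [map_mul] using hu1
  · intro hne
    refine hu1 (hG.eq_one_of_conj_eq hh hu' ?_)
    simpa [map_mul] using hne.symm

/-- `Q` centralises `Q / Z`, while `h` and `t` act on the pair `(u, uʰ)` modulo `Z` by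
`(uʰ, u uʰ)` and `(u, u uʰ)`; and `Q`, `h`, `t` generate `G`. -/
theorem normal_closure_mk'_pair (hG : IsBiextraspecial G Q m) {h t u : G} (hh : orderOf h = 3)
    (htQ : t ∉ Q) (ht2 : t * t ∈ Q) (hth : t * h * t⁻¹ * h ∈ Q) (hu : u ∈ Q)
    (htu : π (t * u * t⁻¹) = π u) : (closure {π u, π (h * u * h⁻¹)}).Normal := by
  have := hG.finite
  set w := h * u * h⁻¹
  set N := closure {π u, π w}
  have hmem {g : G} (hg : ∀ s ∈ ({π u, π w} : Set _), π g * s * (π g)⁻¹ ∈ N) :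
      g ∈ (normalizer (N : Set (G ⧸ centerOf G Q))).comap π :=
    mem_normalizer_fintype fun _ hn ↦ conj_mem_closure_of_forall_conj_mem hg hn
  have hu_mem : π u ∈ N := subset_closure (.inl rfl)
  have hw_mem : π w ∈ N := subset_closure (.inr rfl)
  have huw_mem : π u * π w ∈ N := mul_mem hu_mem hw_mem
  have hsurj := QuotientGroup.mk'_surjective (centerOf G Q)
  rw [← normalizer_eq_top_iff, ← map_comap_eq_self_of_surjective hsurj (normalizer _)]
  refine (congrArg _ (hG.eq_top_of_le (fun q hq ↦ hmem ?_) hh (hmem ?_) htQ ht2 (hmem ?_))).trans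
    (map_top_of_surjective _ hsurj)
  · rintro s (rfl | rfl)
    · rwa [hG.conj_eq_of_mem_map hq (mem_map_of_mem π hu)]
    · rwa [hG.conj_eq_of_mem_map hq (mem_map_of_mem π (hG.normal.conj_mem u hu h))]
  · rintro s (rfl | rfl)
    · simpa [w] using hw_mem
    · convert huw_mem using 1
      simpa only [map_mul, map_inv, w] using hG.mk'_conj_conj_eq hh hu
  · rintro s (rfl | rfl)
    · convert hu_mem using 1
      simpa only [map_mul, map_inv] using htu
    · convert huw_mem using 1
      simpa only [map_mul, map_inv, w] using hG.mk'_conj_conj_eq_of_conj_mul_mem hh hth hu htu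

/-- The commutator `c = [u, uʰ]` lies in `Z`, and modulo `Z` conjugation by `h` sends the pair
`(u, uʰ)` to `(uʰ, u uʰ)`; hence `cʰ = [uʰ, u] = c⁻¹ = c`, so `c = 1`. -/
theorem mul_conj_comm (hG : IsBiextraspecial G Q m) {h u : G} (hh : orderOf h = 3)
    (hu : u ∈ Q) : u * (h * u * h⁻¹) = h * u * h⁻¹ * u := by
  set w := h * u * h⁻¹
  have hw : w ∈ Q := hG.normal.conj_mem u hu h
  set z := (u * w)⁻¹ * (h * w * h⁻¹)
  have hz : z ∈ centerOf G Q := by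
    rw [← QuotientGroup.eq (s := centerOf G Q)]
    simpa [w] using (hG.mk'_conj_conj_eq hh hu).symm
  have hzw : w⁻¹ * z = z * w⁻¹ := mul_comm_of_mem_centerOf hz (inv_mem hw)
  have hc : ⁅u, w⁆ ∈ centerOf G Q := hG.comm_mem_center u hu w hw
  have hfix : h * ⁅u, w⁆ * h⁻¹ = ⁅u, w⁆ :=
    calc h * ⁅u, w⁆ * h⁻¹ = ⁅w, u * w * z⁆ := by simp only [commutatorElement_def, z, w]; group
      _ = w * u * w * (w⁻¹ * z) * z⁻¹ * w⁻¹ * u⁻¹ := by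
          rw [hzw, commutatorElement_def]; group
      _ = ⁅u, w⁆⁻¹ := by rw [commutatorElement_def]; group
      _ = ⁅u, w⁆ := inv_eq_of_mul_eq_one_right (hG.center_exponent _ hc)
  exact commutatorElement_eq_one_iff_mul_comm.mp (hG.order_three_fpf h hh _ (centerOf_le hc) hfix)

theorem mul_comm_of_mem_union (hG : IsBiextraspecial G Q m) {h u : G}
    (hh : orderOf h = 3) (hu : u ∈ Q) :
    ∀ x ∈ ({u, h * u * h⁻¹} ∪ centerOf G Q : Set G),
      ∀ y ∈ ({u, h * u * h⁻¹} ∪ centerOf G Q : Set G), x * y = y * x := by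
  have hQ : ∀ x ∈ ({u, h * u * h⁻¹} : Set G), x ∈ Q := by
    rintro x (rfl | rfl)
    exacts [hu, hG.normal.conj_mem u hu h]
  rintro x (hx | hx) y (hy | hy)
  · rcases hx with rfl | rfl <;> rcases hy with rfl | rfl
    exacts [rfl, hG.mul_conj_comm hh hu, (hG.mul_conj_comm hh hu).symm, rfl]
  · exact mul_comm_of_mem_centerOf hy (hQ x hx)
  · exact (mul_comm_of_mem_centerOf hx (hQ y hy)).symm
  · exact mul_comm_of_mem_centerOf hy (centerOf_le hx)

end Quotient

end IsBiextraspecial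

namespace IsDent

variable {G : Type*} [Group G] {Q D : Subgroup G} {m : ℕ}

section Quotient

variable [Q.Normal]

local notation "π" => QuotientGroup.mk' (centerOf G Q)

/-- If `v ∈ D` is not fixed by `t` modulo `Z`, then `v vᵗ` is (as `t² ∈ Q` acts trivially on
`Q / Z`), and it is nontrivial modulo `Z`. -/
theorem exists_mk'_conj_eq (hD : IsDent G Q D) (hG : IsBiextraspecial G Q m) {t : G}
    (ht2 : t * t ∈ Q) : ∃ u ∈ D, u ∉ centerOf G Q ∧ π (t * u * t⁻¹) = π u := by
  obtain ⟨v, hvD, hvZ⟩ := SetLike.exists_of_lt hD.center_lt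
  have hv := mem_map_of_mem π (hD.lt_Q.le hvD)
  have hv' := mem_map_of_mem π (hD.lt_Q.le (hD.normal.conj_mem v hvD t))
  by_cases hvv : v * (t * v * t⁻¹) ∈ centerOf G Q
  · refine ⟨v, hvD, hvZ, ?_⟩
    have : π v * π (t * v * t⁻¹) = 1 := by
      rwa [← map_mul, QuotientGroup.mk'_apply, QuotientGroup.eq_one_iff]
    rw [eq_inv_of_mul_eq_one_right this,
      inv_eq_of_mul_eq_one_right (hG.mul_self_eq_one_of_mem_map hv)]
  · refine ⟨v * (t * v * t⁻¹), mul_mem hvD (hD.normal.conj_mem v hvD t), hvv, ?_⟩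
    calc π (t * (v * (t * v * t⁻¹)) * t⁻¹)
        = π (t * v * t⁻¹) * (π (t * t) * π v * (π (t * t))⁻¹) := by
          simp only [map_mul, map_inv]; group
      _ = π (v * (t * v * t⁻¹)) := by
          rw [hG.conj_eq_of_mem_map ht2 hv, hG.mul_comm_of_mem_map hv' hv, ← map_mul]

/-- Minimality of `D` applies to the span of `u` and `uʰ` modulo `Z`, for `u` as in
`exists_mk'_conj_eq`. -/
theorem exists_eq_comap_closure (hD : IsDent G Q D) (hG : IsBiextraspecial G Q m) {h : G}
    (hh : orderOf h = 3) : ∃ u ∈ D, u ∉ centerOf G Q ∧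
      D = (closure {π u, π (h * u * h⁻¹)}).comap π := by
  obtain ⟨t, htQ, ht2, hth⟩ := hG.exists_conj_mul_mem
  obtain ⟨u, huD, huZ, htu⟩ := hD.exists_mk'_conj_eq hG ht2
  have hnormal := hG.normal_closure_mk'_pair hh htQ ht2
    (hth h (by rw [← hh, pow_orderOf_eq_one])) (hD.lt_Q.le huD) htu
  refine ⟨u, huD, huZ, (hD.minimal _ (hnormal.comap π) ?_ ?_).symm⟩
  · refine SetLike.lt_iff_le_and_exists.mpr ⟨fun z hz ↦ ?_, u, subset_closure (.inl rfl), huZ⟩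
    have hz1 : π z = 1 := (QuotientGroup.eq_one_iff z).mpr hz
    rw [mem_comap, hz1]
    exact one_mem _
  · have hle : closure {π u, π (h * u * h⁻¹)} ≤ D.map π := (closure_le _).mpr <| by
      rintro s (rfl | rfl)
      exacts [mem_map_of_mem π huD, mem_map_of_mem π (hD.normal.conj_mem u huD h)]
    refine (comap_mono hle).trans ?_
    rw [comap_map_eq, QuotientGroup.ker_mk', sup_eq_left.mpr hD.center_lt.le]

end Quotient

theorem card_eq (hD : IsDent G Q D) (hG : IsBiextraspecial G Q m) : Nat.card D = 16 := by
  have := hG.normal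
  obtain ⟨h, hh⟩ := hG.exists_orderOf_eq_three
  obtain ⟨u, huD, huZ, hD_eq⟩ := hD.exists_eq_comap_closure hG hh
  rw [hD_eq, card_comap_mk', hG.card_center, hG.card_closure_mk'_pair hh (hD.lt_Q.le huD) huZ]

theorem exists_eq_closure (hD : IsDent G Q D) (hG : IsBiextraspecial G Q m) {h : G}
    (hh : orderOf h = 3) :
    ∃ u ∈ D, u ∉ centerOf G Q ∧ D = closure ({u, h * u * h⁻¹} ∪ centerOf G Q) := by
  have := hG.normal
  obtain ⟨u, huD, huZ, hD_eq⟩ := hD.exists_eq_comap_closure hG hh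
  refine ⟨u, huD, huZ, ?_⟩
  rw [hD_eq, ← Set.image_pair, ← MonoidHom.map_closure, comap_map_eq, QuotientGroup.ker_mk',
    Subgroup.closure_union, closure_eq]

open scoped IsMulCommutative in
theorem nonempty_mulEquiv_of_mul_self_eq_one (hD : IsDent G Q D) (hG : IsBiextraspecial G Q m)
    [IsMulCommutative D] {h u : G} (hh : orderOf h = 3) (huD : u ∈ D)
    (hD_eq : D = closure ({u, h * u * h⁻¹} ∪ centerOf G Q)) (hu2 : u * u = 1) :
    Nonempty (D ≃* Multiplicative (ZMod 2 × ZMod 2 × ZMod 2 × ZMod 2)) := by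
  have := hG.normal
  have := hG.finite
  have hS2 : ∀ x ∈ ({u, h * u * h⁻¹} ∪ centerOf G Q : Set G), x * x = 1 := by
    rintro x ((rfl | rfl) | hx)
    · exact hu2
    · rw [show h * u * h⁻¹ * (h * u * h⁻¹) = h * (u * u) * h⁻¹ by group, hu2, mul_one,
        mul_inv_cancel]
    · exact hG.center_exponent x hx
  refine nonempty_mulEquiv_of_pow_eq_one 2 (fun d ↦ Subtype.ext ?_) (by decide) ?_
  · simpa [sq] using mul_self_eq_one_of_mem_closure
      (hG.mul_comm_of_mem_union hh (hD.lt_Q.le huD)) hS2 (hD_eq ▸ d.2)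
  · rw [hD.card_eq hG, Nat.card_congr Multiplicative.toAdd]
    simp

open scoped IsMulCommutative in
theorem nonempty_mulEquiv_of_mul_self_ne_one (hD : IsDent G Q D) (hG : IsBiextraspecial G Q m)
    [IsMulCommutative D] {h u : G} (hh : orderOf h = 3) (huD : u ∈ D) (hu2 : u * u ≠ 1) :
    Nonempty (D ≃* Multiplicative (ZMod 4 × ZMod 4)) := by
  have := hG.finite
  have hu : u ∈ Q := hD.lt_Q.le huD
  set w := h * u * h⁻¹
  have hwD : w ∈ D := hD.normal.conj_mem u huD h
  have hww : w * w = h * (u * u) * h⁻¹ := by simp only [w]; group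
  refine nonempty_mulEquiv_zmod_four_prod (hD.card_eq hG) (a := ⟨u, huD⟩) (b := ⟨w, hwD⟩)
    (Subtype.ext (hG.pow_four_eq_one hu)) (Subtype.ext (hG.pow_four_eq_one (hD.lt_Q.le hwD)))
    ?_ ?_ ?_ <;> simp only [ne_eq, Subtype.ext_iff, coe_pow, coe_mul, OneMemClass.coe_one]
  · simpa [sq] using hu2
  · rwa [sq, hww, conj_eq_one_iff]
  · rw [show (u * w) ^ 2 = u * u * (w * w) by
      rw [sq, mul_assoc, ← mul_assoc w, ← setLike_mul_comm huD hwD]; group]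
    exact hG.mul_self_mul_mul_self_conj_ne_one hh hu hu2

end IsDent

/-- every dent of a biextraspecial group is abelian, and is isomorphic
either to the elementary abelian group `2⁴` or to `C₄ × C₄`. -/
theorem stmt3 (G : Type*) [Group G] (Q D : Subgroup G) (m : ℕ)
    (hG : IsBiextraspecial G Q m) (hD : IsDent G Q D) :
    (∀ d₁ ∈ D, ∀ d₂ ∈ D, d₁ * d₂ = d₂ * d₁) ∧
      (Nonempty (D ≃* Multiplicative (ZMod 2 × ZMod 2 × ZMod 2 × ZMod 2)) ∨
        Nonempty (D ≃* Multiplicative (ZMod 4 × ZMod 4))) := by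
  have := hG.normal
  obtain ⟨h, hh⟩ := hG.exists_orderOf_eq_three
  obtain ⟨u, huD, huZ, hD_eq⟩ := hD.exists_eq_closure hG hh
  have : IsMulCommutative D :=
    hD_eq ▸ isMulCommutative_closure (hG.mul_comm_of_mem_union hh (hD.lt_Q.le huD))
  refine ⟨fun _ h₁ _ h₂ ↦ setLike_mul_comm h₁ h₂, ?_⟩
  by_cases hu2 : u * u = 1
  · exact .inl (hD.nonempty_mulEquiv_of_mul_self_eq_one hG hh huD hD_eq hu2)
  · exact .inr (hD.nonempty_mulEquiv_of_mul_self_ne_one hG hh huD hu2)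
end

section
/- Let D be a group isomorphic to C₄ × C₄ on which S₃ = ⟨s,t⟩ (s of order 3, t an involution) acts so that s acts fixed-point-freely and t acts non-trivially on D/Φ(D). Then there exist generators x, y of D with xᵗ = x, yᵗ = x⁻¹y⁻¹, xˢ = y, yˢ = x⁻¹y⁻¹, and exactly two generating pairs satisfy these relations, namely (x,y) and (x⁻¹,y⁻¹). In particular there is a unique non-trivial automorphism of D commuting with the action of S₃. -/
/-- let `D ≅ C₄ × C₄` carry an action of `S₃ = ⟨s, t⟩` (given by
automorphisms `σ` of order 3 and `τ` of order 2 with `τστ = σ⁻¹`) such that `σ`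
acts fixed-point-freely and `τ` acts non-trivially on `D/Φ(D)` (where
`Φ(D) = {f² : f ∈ D}`).  Then there are generators `x, y` of `D` with
`xᵗ = x`, `yᵗ = x⁻¹y⁻¹`, `xˢ = y`, `yˢ = x⁻¹y⁻¹`; exactly the two pairs `(x, y)`
and `(x⁻¹, y⁻¹)` satisfy these relations, and there is a unique non-trivial
automorphism of `D` commuting with the action of `S₃`. -/
theorem stmt4 (D : Type*) [Group D]
    (hD : Nonempty (D ≃* Multiplicative (ZMod 4 × ZMod 4)))
    (σ τ : MulAut D)
    (hσ3 : σ ^ 3 = 1) (hσ1 : σ ≠ 1) (hτ2 : τ ^ 2 = 1) (hτ1 : τ ≠ 1)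
    (hrel : τ * σ * τ = σ⁻¹)
    (hfpf : ∀ d : D, σ d = d → d = 1)
    (hfrat : ∃ d : D, ∀ f : D, τ d ≠ d * (f * f)) :
    ∃ x y : D,
      (Subgroup.closure {x, y} = ⊤ ∧
        τ x = x ∧ τ y = x⁻¹ * y⁻¹ ∧ σ x = y ∧ σ y = x⁻¹ * y⁻¹) ∧
      (∀ x' y' : D,
        (Subgroup.closure {x', y'} = ⊤ ∧
          τ x' = x' ∧ τ y' = x'⁻¹ * y'⁻¹ ∧ σ x' = y' ∧ σ y' = x'⁻¹ * y'⁻¹) →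
        (x' = x ∧ y' = y) ∨ (x' = x⁻¹ ∧ y' = y⁻¹)) ∧
      (∃! α : MulAut D, α ≠ 1 ∧ α * σ = σ * α ∧ α * τ = τ * α) := by
  obtain ⟨e⟩ := hD
  have comm : ∀ a b : D, a * b = b * a := by
    intro a b
    apply e.injective
    rw [map_mul, map_mul, mul_comm]
  letI : CommGroup D := { ‹Group D› with mul_comm := comm }
  -- exponent 4
  have pow4M : ∀ m : Multiplicative (ZMod 4 × ZMod 4), m ^ (4:ℕ) = 1 := by decide
  have pow4 : ∀ d : D, d ^ (4:ℕ) = 1 := by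
    intro d; apply e.injective; rw [map_pow, map_one]; exact pow4M _
  have zpow4 : ∀ d : D, d ^ (4:ℤ) = 1 := by
    intro d
    have h := pow4 d
    rw [show (4:ℤ) = ((4:ℕ):ℤ) by norm_num, zpow_natCast]
    exact h
  -- square roots of 2-torsion
  have hsqM : ∀ m : Multiplicative (ZMod 4 × ZMod 4), m * m = 1 → ∃ w, m = w * w := by decide
  have hsq : ∀ z : D, z * z = 1 → ∃ f : D, z = f * f := by
    intro z hz
    obtain ⟨w, hw⟩ := hsqM (e z) (by rw [← map_mul, hz, map_one])
    exact ⟨e.symm w, by rw [← map_mul, ← hw, e.symm_apply_apply]⟩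
  -- the subgroup of squares
  let S : Subgroup D :=
    { carrier := {d : D | ∃ f : D, d = f * f}
      one_mem' := ⟨1, (one_mul 1).symm⟩
      mul_mem' := by
        rintro a b ⟨f, rfl⟩ ⟨g, rfl⟩
        exact ⟨f * g, mul_mul_mul_comm f f g g⟩
      inv_mem' := by
        rintro a ⟨f, rfl⟩
        exact ⟨f⁻¹, mul_inv f f⟩ }
  have memS : ∀ d : D, d ∈ S ↔ ∃ f : D, d = f * f := fun d => Iff.rfl
  have Smap : ∀ (φ : MulAut D) (d : D), d ∈ S → φ d ∈ S := by
    rintro φ d ⟨f, rfl⟩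
    exact ⟨φ f, map_mul φ f f⟩
  -- iterated applications
  have hσ3' : ∀ d : D, σ (σ (σ d)) = d := by
    intro d
    have h : (σ ^ 3) d = d := by rw [hσ3]; rfl
    simpa [pow_succ, MulAut.mul_apply, MulAut.one_apply] using h
  have hτ2' : ∀ d : D, τ (τ d) = d := by
    intro d
    have h : (τ ^ 2) d = d := by rw [hτ2]; rfl
    simpa [pow_succ, MulAut.mul_apply, MulAut.one_apply] using h
  -- key identity
  have K : ∀ d : D, d * σ d * σ (σ d) = 1 := by
    intro d
    apply hfpf
    rw [map_mul, map_mul, hσ3' d]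
    exact (mul_rotate d (σ d) (σ (σ d))).symm
  -- construction of x and y
  obtain ⟨d₀, hd₀⟩ := hfrat
  obtain ⟨x, hxdef⟩ : ∃ x : D, x = d₀ * τ d₀ := ⟨_, rfl⟩
  obtain ⟨y, hydef⟩ : ∃ y : D, y = σ x := ⟨_, rfl⟩
  have hσx : σ x = y := hydef.symm
  have hτx : τ x = x := by
    rw [hxdef, map_mul, hτ2' d₀, mul_comm]
  have hσy : σ y = x⁻¹ * y⁻¹ := by
    have h := K x
    have h' : (σ (σ x))⁻¹ = x * σ x := inv_eq_of_mul_eq_one_left h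
    have h2 : σ (σ x) = (x * y)⁻¹ := by rw [← hσx, ← h', inv_inv]
    calc σ y = σ (σ x) := by rw [hydef]
    _ = x⁻¹ * y⁻¹ := by rw [h2, mul_inv]
  have hts : τ * σ = σ⁻¹ * τ := by
    rw [← hrel, mul_assoc (τ * σ), ← sq, hτ2, mul_one]
  have hσinv : σ⁻¹ = σ ^ 2 := inv_eq_of_mul_eq_one_left ((pow_succ σ 2).symm.trans hσ3)
  have hτy : τ y = x⁻¹ * y⁻¹ := by
    have h1 : τ (σ x) = σ⁻¹ (τ x) := by
      rw [← MulAut.mul_apply, ← MulAut.mul_apply, hts]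
    rw [hydef, h1, hτx, hσinv]
    have : (σ ^ 2) x = σ (σ x) := by
      simp [pow_succ, MulAut.mul_apply, MulAut.one_apply]
    rw [this, hσx, hσy]
  -- x is not a square
  have hxS : x ∉ S := by
    rintro ⟨f, hf⟩
    apply hd₀ (d₀⁻¹ * f)
    have hx' : d₀ * τ d₀ = f * f := by rw [← hxdef]; exact hf
    calc τ d₀ = d₀⁻¹ * (d₀ * τ d₀) := by rw [inv_mul_cancel_left]
    _ = d₀⁻¹ * (f * f) := by rw [hx']
    _ = d₀ * (d₀⁻¹ * f * (d₀⁻¹ * f)) := by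
        rw [mul_assoc d₀⁻¹ f, mul_left_comm f d₀⁻¹ f, mul_inv_cancel_left]
  clear hxdef hydef
  -- normal form helpers
  have hmul : ∀ p q r s : ℤ, (x^p * y^q) * (x^r * y^s) = x^(p+r) * y^(q+s) := by
    intro p q r s
    rw [mul_mul_mul_comm, ← zpow_add, ← zpow_add]
  have hpow : ∀ p q c : ℤ, (x^p * y^q)^c = x^(p*c) * y^(q*c) := by
    intro p q c
    rw [mul_zpow, ← zpow_mul, ← zpow_mul]
  have hinv : ∀ p q : ℤ, (x^p * y^q)⁻¹ = x^(-p) * y^(-q) := by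
    intro p q
    rw [mul_inv, zpow_neg, zpow_neg]
  have hσn : ∀ p q : ℤ, σ (x^p * y^q) = x^(-q) * y^(p-q) := by
    intro p q
    rw [map_mul, map_zpow, map_zpow, hσx, hσy, mul_zpow, inv_zpow, inv_zpow,
      ← zpow_neg, ← zpow_neg, mul_left_comm, ← zpow_add, ← sub_eq_add_neg]
  have hτn : ∀ p q : ℤ, τ (x^p * y^q) = x^(p-q) * y^(-q) := by
    intro p q
    rw [map_mul, map_zpow, map_zpow, hτx, hτy, mul_zpow, inv_zpow, inv_zpow,
      ← zpow_neg, ← zpow_neg, ← mul_assoc, ← zpow_add, ← sub_eq_add_neg]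
  have hcanc : ∀ p q r s : ℤ, x^p*y^q = x^r*y^s → x^(p-r)*y^(q-s) = 1 := by
    intro p q r s h
    rw [sub_eq_add_neg, sub_eq_add_neg, ← hmul, h, ← hinv, mul_inv_cancel]
  -- elimination identity
  have elim : ∀ a b : ℤ,
      x ^ (a*a - a*b + b*b) = (x^a*y^b)^(a-b) * (σ (x^a*y^b))^(-b) := by
    intro a b
    rw [hσn, hpow, hpow, hmul]
    rw [show b*(a-b) + (a-b)*(-b) = 0 from by ring, zpow_zero, mul_one,
      show a*(a-b) + -b*(-b) = a*a - a*b + b*b from by ring]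
  -- odd powers of x in S force x in S
  have hoddS : ∀ N : ℤ, Odd N → x ^ N ∈ S → x ∈ S := by
    intro N hN h
    obtain ⟨m, hm⟩ := hN
    have h1 : x ^ (N*N) ∈ S := by
      rw [zpow_mul]; exact S.zpow_mem h _
    have h2 : x ^ (N*N) = x := by
      rw [show N*N = 4*(m*m+m) + 1 from by rw [hm]; ring, zpow_add, zpow_one,
        zpow_mul, zpow4, one_zpow, one_mul]
    rwa [h2] at h1
  -- key parity lemma
  have Ekey : ∀ a b : ℤ, (x^a * y^b) ∈ S → 2 ∣ a ∧ 2 ∣ b := by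
    intro a b hz
    by_contra hcon
    have hodd : Odd (a*a - a*b + b*b) := by
      rcases Int.even_or_odd a with ⟨k, hk⟩ | ⟨k, hk⟩ <;>
        rcases Int.even_or_odd b with ⟨l, hl⟩ | ⟨l, hl⟩
      · exact absurd ⟨⟨k, by omega⟩, ⟨l, by omega⟩⟩ hcon
      · exact ⟨2*k*k - 2*k*l - k + 2*l*l + 2*l, by subst hk hl; ring⟩
      · exact ⟨2*k*k + 2*k - 2*k*l - l + 2*l*l, by subst hk hl; ring⟩
      · exact ⟨2*k*k + k - 2*k*l + l + 2*l*l, by subst hk hl; ring⟩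
    have hN : x ^ (a*a - a*b + b*b) ∈ S := by
      rw [elim a b]
      exact S.mul_mem (S.zpow_mem hz _) (S.zpow_mem (Smap σ _ hz) _)
    exact hxS (hoddS _ hodd hN)
  -- the main injectivity lemma
  have Hkey : ∀ a b : ℤ, x^a * y^b = 1 → (4:ℤ) ∣ a ∧ (4:ℤ) ∣ b := by
    intro a b h
    have h1 : x^a*y^b ∈ S := by rw [h]; exact S.one_mem
    obtain ⟨⟨a', ha'⟩, ⟨b', hb'⟩⟩ := Ekey a b h1
    have hz : (x^a' * y^b') * (x^a' * y^b') = 1 := by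
      rw [hmul, show a' + a' = a from by omega, show b' + b' = b by omega]
      exact h
    obtain ⟨f, hf⟩ := hsq _ hz
    obtain ⟨⟨a'', ha''⟩, ⟨b'', hb''⟩⟩ := Ekey a' b' ⟨f, hf⟩
    exact ⟨⟨a'', by omega⟩, ⟨b'', by omega⟩⟩
  -- representation of every element
  letI : Fintype D := Fintype.ofEquiv _ e.symm.toEquiv
  have hcard : Fintype.card D = Fintype.card (ZMod 4 × ZMod 4) := by
    rw [Fintype.card_congr (e.toEquiv.trans Multiplicative.toAdd)]
  set F : ZMod 4 × ZMod 4 → D :=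
    fun p => x ^ ((p.1.val : ℤ)) * y ^ ((p.2.val : ℤ)) with hF
  have Finj : Function.Injective F := by
    intro p q hpq
    have h0 : x ^ ((p.1.val:ℤ) - q.1.val) * y ^ ((p.2.val:ℤ) - q.2.val) = 1 :=
      hcanc _ _ _ _ hpq
    obtain ⟨⟨c1, hc1⟩, ⟨c2, hc2⟩⟩ := Hkey _ _ h0
    have hl1 : p.1.val < 4 := ZMod.val_lt p.1
    have hl2 : q.1.val < 4 := ZMod.val_lt q.1
    have hl3 : p.2.val < 4 := ZMod.val_lt p.2
    have hl4 : q.2.val < 4 := ZMod.val_lt q.2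
    have e1 : p.1 = q.1 := ZMod.val_injective _ (by omega)
    have e2 : p.2 = q.2 := ZMod.val_injective _ (by omega)
    exact Prod.ext e1 e2
  have Fsurj : Function.Surjective F :=
    ((Fintype.bijective_iff_injective_and_card F).mpr ⟨Finj, hcard.symm⟩).2
  have hrep : ∀ d : D, ∃ a b : ℤ, d = x ^ a * y ^ b := by
    intro d
    obtain ⟨p, hp⟩ := Fsurj d
    exact ⟨_, _, hp.symm⟩
  -- generation
  have hgen : Subgroup.closure ({x, y} : Set D) = ⊤ := by
    rw [eq_top_iff]
    intro d _
    obtain ⟨a, b, rfl⟩ := hrep d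
    exact mul_mem
      (Subgroup.zpow_mem _ (Subgroup.subset_closure (by simp)) a)
      (Subgroup.zpow_mem _ (Subgroup.subset_closure (by simp)) b)
  have hStop : S ≠ ⊤ := by
    intro h
    exact hxS (by rw [h]; trivial)
  -- uniqueness of pairs
  have huniq : ∀ x' y' : D,
      (Subgroup.closure {x', y'} = ⊤ ∧
        τ x' = x' ∧ τ y' = x'⁻¹ * y'⁻¹ ∧ σ x' = y' ∧ σ y' = x'⁻¹ * y'⁻¹) →
      (x' = x ∧ y' = y) ∨ (x' = x⁻¹ ∧ y' = y⁻¹) := by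
    rintro x' y' ⟨hg', ht', hty', hs', hsy'⟩
    obtain ⟨a, b, hab⟩ := hrep x'
    have htx' : x^(a-b) * y^(-b) = x^a * y^b := by
      rw [← hτn, ← hab, ht', hab]
    have hb4 : (4:ℤ) ∣ b := by
      obtain ⟨h1, -⟩ := Hkey _ _ (hcanc _ _ _ _ htx')
      obtain ⟨c, hc⟩ := h1
      exact ⟨-c, by omega⟩
    obtain ⟨b', hb'⟩ := hb4
    have hxa : x' = x ^ a := by
      rw [hab, hb', zpow_mul, zpow4, one_zpow, mul_one]
    have hya : y' = y ^ a := by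
      rw [← hs', hxa, map_zpow, hσx]
    rcases Int.even_or_odd a with ⟨k, hk⟩ | ⟨k, hk⟩
    · exfalso
      apply hStop
      apply le_antisymm le_top
      rw [← hg']
      apply Subgroup.closure_le _ |>.mpr
      rintro z (rfl | rfl)
      · exact ⟨x ^ k, by rw [hxa, hk, zpow_add]⟩
      · exact ⟨y ^ k, by rw [hya, hk, zpow_add]⟩
    · rcases Int.even_or_odd k with ⟨m, hm⟩ | ⟨m, hm⟩
      · left
        constructor
        · rw [hxa, show a = 4*m + 1 from by omega, zpow_add, zpow_mul, zpow4,
            one_zpow, one_mul, zpow_one]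
        · rw [hya, show a = 4*m + 1 from by omega, zpow_add, zpow_mul, zpow4,
            one_zpow, one_mul, zpow_one]
      · right
        constructor
        · rw [hxa, show a = 4*(m+1) + (-1) from by omega, zpow_add, zpow_mul,
            zpow4, one_zpow, one_mul, zpow_neg, zpow_one]
        · rw [hya, show a = 4*(m+1) + (-1) from by omega, zpow_add, zpow_mul,
            zpow4, one_zpow, one_mul, zpow_neg, zpow_one]
  -- the inversion automorphism
  let α : MulAut D :=
    { toFun := fun d => d⁻¹
      invFun := fun d => d⁻¹
      left_inv := fun d => inv_inv d
      right_inv := fun d => inv_inv d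
      map_mul' := fun a b => mul_inv a b }
  have hαapp : ∀ d : D, α d = d⁻¹ := fun _ => rfl
  have hxx : x * x ≠ 1 := by
    intro h
    exact hxS (hsq x h)
  refine ⟨x, y, ⟨hgen, hτx, hτy, hσx, hσy⟩, huniq, α, ⟨?_, ?_, ?_⟩, ?_⟩
  · intro h
    have hx1 : α x = x := by rw [h]; rfl
    rw [hαapp] at hx1
    apply hxx
    calc x * x = x⁻¹ * x := by rw [hx1]
    _ = 1 := inv_mul_cancel x
  · apply MulEquiv.ext
    intro d
    simp only [MulAut.mul_apply, hαapp, map_inv]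
  · apply MulEquiv.ext
    intro d
    simp only [MulAut.mul_apply, hαapp, map_inv]
  · rintro β ⟨hβ1, hβσ, hβτ⟩
    have hgβ : Subgroup.closure ({β x, β y} : Set D) = ⊤ := by
      rw [← Set.image_pair, show ⇑β = ⇑β.toMonoidHom from rfl,
        ← MonoidHom.map_closure, hgen, Subgroup.map_top_of_surjective _ β.surjective]
    have c1 : τ (β x) = β x := by
      rw [← MulAut.mul_apply, ← hβτ, MulAut.mul_apply, hτx]
    have c2 : τ (β y) = (β x)⁻¹ * (β y)⁻¹ := by
      rw [← MulAut.mul_apply, ← hβτ, MulAut.mul_apply, hτy, map_mul, map_inv, map_inv]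
    have c3 : σ (β x) = β y := by
      rw [← MulAut.mul_apply, ← hβσ, MulAut.mul_apply, hσx]
    have c4 : σ (β y) = (β x)⁻¹ * (β y)⁻¹ := by
      rw [← MulAut.mul_apply, ← hβσ, MulAut.mul_apply, hσy, map_mul, map_inv, map_inv]
    rcases huniq (β x) (β y) ⟨hgβ, c1, c2, c3, c4⟩ with ⟨hbx, hby⟩ | ⟨hbx, hby⟩
    · exfalso
      apply hβ1
      apply MulEquiv.ext
      intro d
      obtain ⟨a, b, rfl⟩ := hrep d
      rw [map_mul, map_zpow, map_zpow, hbx, hby]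
      rfl
    · apply MulEquiv.ext
      intro d
      obtain ⟨a, b, rfl⟩ := hrep d
      rw [map_mul, map_zpow, map_zpow, hbx, hby, hαapp, inv_zpow, inv_zpow, ← mul_inv]
end
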